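/- arXiv:1904.02694 — 9 statements merged into one kernel-verified Lean document; each statement's English description precedes it below -/
import Mathlib

section
/- The number of inversion sequences of length n avoiding the consecutive pattern 000 satisfies |I_n(000)| = (n-1)|I_{n-1}(000)| + (n-2)|I_{n-2}(000)| for n ≥ 3, with |I_1(000)| = 1 and |I_2(000)| = 2. -/
/-- `e : Fin n → Fin n` is an inversion sequence (0-indexed): `e i ≤ i`. -/
def IsInvSeq {n : ℕ} (e : Fin n → Fin n) : Prop := ∀ i : Fin n, (e i : ℕ) ≤ (i : ℕ)

/-- Extension of `e` to `ℕ → ℕ`. -/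
def extSeq {n : ℕ} (e : Fin n → Fin n) : ℕ → ℕ := fun i => if h : i < n then (e ⟨i, h⟩ : ℕ) else 0

/-- `e` contains the consecutive pattern 000. -/
def Contains000 {n : ℕ} (e : Fin n → Fin n) : Prop :=
  ∃ i : ℕ, i + 2 < n ∧ extSeq e i = extSeq e (i + 1) ∧ extSeq e (i + 1) = extSeq e (i + 2)

/-- The number of inversion sequences of length `n` avoiding the consecutive pattern 000. -/
noncomputable def I000 (n : ℕ) : ℕ := Nat.card {e : Fin n → Fin n // IsInvSeq e ∧ ¬ Contains000 e}

instance {n : ℕ} (e : Fin n → Fin n) : Decidable (IsInvSeq e) :=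
  show Decidable (∀ i : Fin n, (e i : ℕ) ≤ (i : ℕ)) from inferInstance

instance {n : ℕ} (e : Fin n → Fin n) : Decidable (Contains000 e) :=
  decidable_of_iff (∃ i < n, i + 2 < n ∧ extSeq e i = extSeq e (i + 1) ∧
      extSeq e (i + 1) = extSeq e (i + 2)) (by
    constructor
    · rintro ⟨i, -, h⟩; exact ⟨i, h⟩
    · rintro ⟨i, h⟩; exact ⟨i, by omega, h⟩)

open Finset

def cntA (n : ℕ) : ℕ :=
  (univ.filter fun e : Fin n → Fin n => IsInvSeq e ∧ ¬ Contains000 e).card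

def cntEq (n : ℕ) : ℕ :=
  (univ.filter fun e : Fin (n+2) → Fin (n+2) =>
    (IsInvSeq e ∧ ¬ Contains000 e) ∧ extSeq e n = extSeq e (n+1)).card

def cntNe (n : ℕ) : ℕ :=
  (univ.filter fun e : Fin (n+2) → Fin (n+2) =>
    (IsInvSeq e ∧ ¬ Contains000 e) ∧ ¬ extSeq e n = extSeq e (n+1)).card

lemma I000_eq_cntA (n : ℕ) : I000 n = cntA n := by
  rw [I000, Nat.card_eq_fintype_card, Fintype.card_subtype, cntA]

/-- extend a sequence of length `m` by one value. -/
def ext1 {m : ℕ} (f : Fin m → Fin m) (v : Fin (m+1)) : Fin (m+1) → Fin (m+1) :=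
  fun i => if h : (i : ℕ) < m then (f ⟨i, h⟩).castSucc else v

/-- drop the last element. -/
def trunc1 {m : ℕ} (e : Fin (m+1) → Fin (m+1)) : Fin m → Fin m :=
  fun i => ⟨min (e i.castSucc : ℕ) (i : ℕ), lt_of_le_of_lt (min_le_right _ _) i.isLt⟩

lemma extSeq_lt {m : ℕ} (f : Fin (m+1) → Fin (m+1)) (i : ℕ) : extSeq f i < m + 1 := by
  unfold extSeq
  split
  · exact (f _).isLt
  · omega

lemma extSeq_ext1 {m : ℕ} (f : Fin m → Fin m) (v : Fin (m+1)) (i : ℕ) :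
    extSeq (ext1 f v) i = if i < m then extSeq f i else if i = m then (v : ℕ) else 0 := by
  unfold extSeq ext1
  by_cases h1 : i < m
  · simp [h1, Nat.lt_succ_of_lt h1]
  · by_cases h2 : i = m
    · subst h2; simp [h1]
    · have : ¬ i < m + 1 := by omega
      simp [h1, h2, this]

lemma isInvSeq_ext1 {m : ℕ} (f : Fin m → Fin m) (v : Fin (m+1)) :
    IsInvSeq (ext1 f v) ↔ IsInvSeq f := by
  constructor
  · intro h i
    have := h (Fin.castSucc i)
    simpa [ext1, i.isLt, Fin.castSucc] using this
  · intro h i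
    unfold ext1
    split
    · exact le_trans (by simpa using h ⟨(i : ℕ), by omega⟩) le_rfl
    · have : (v : ℕ) ≤ m := by omega
      omega

lemma trunc1_ext1 {m : ℕ} (f : Fin m → Fin m) (hf : IsInvSeq f) (v : Fin (m+1)) :
    trunc1 (ext1 f v) = f := by
  funext i
  unfold trunc1 ext1
  apply Fin.ext
  have h1 : ((Fin.castSucc i : Fin (m+1)) : ℕ) < m := by simpa using i.isLt
  simp only [h1, dif_pos]
  have h2 : (⟨((Fin.castSucc i : Fin (m+1)) : ℕ), h1⟩ : Fin m) = i := Fin.ext (by simp)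
  rw [h2]
  simpa using Nat.min_eq_left (hf i)

lemma ext1_trunc1 {m : ℕ} (e : Fin (m+1) → Fin (m+1)) (he : IsInvSeq e) :
    ext1 (trunc1 e) (e (Fin.last m)) = e := by
  funext i
  unfold ext1 trunc1
  by_cases h : (i : ℕ) < m
  · simp only [h, dif_pos]
    apply Fin.ext
    simp only [Fin.coe_castSucc]
    have hc : Fin.castSucc (⟨(i:ℕ), h⟩ : Fin m) = i := Fin.ext (by simp)
    rw [hc]
    exact Nat.min_eq_left (he i)
  · have : i = Fin.last m := by
      apply Fin.ext; have := i.isLt; simp at *; omega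
    simp [this, h]

lemma contains000_ext1 {k : ℕ} (f : Fin (k+1) → Fin (k+1)) (v : Fin (k+2)) :
    Contains000 (ext1 f v) ↔
      Contains000 f ∨ (1 ≤ k ∧ extSeq f (k-1) = extSeq f k ∧ extSeq f k = (v : ℕ)) := by
  constructor
  · rintro ⟨i, hi, h1, h2⟩
    simp only [extSeq_ext1] at h1 h2
    by_cases hik : i + 2 < k + 1
    · left
      refine ⟨i, hik, ?_, ?_⟩
      · rw [if_pos (by omega), if_pos (by omega)] at h1; exact h1
      · rw [if_pos (by omega), if_pos (by omega)] at h2; exact h2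
    · have hi2 : i + 2 = k + 1 := by omega
      right
      refine ⟨by omega, ?_, ?_⟩
      · rw [if_pos (by omega), if_pos (by omega)] at h1
        have e1 : i = k - 1 := by omega
        rw [e1] at h1
        have e2 : k - 1 + 1 = k := by omega
        rw [e2] at h1
        exact h1
      · rw [if_pos (by omega), if_neg (by omega), if_pos (by omega)] at h2
        have : i + 1 = k := by omega
        rw [this] at h2
        exact h2
  · rintro (⟨i, hi, h1, h2⟩ | ⟨hk, h1, h2⟩)
    · exact ⟨i, by omega, by
        rw [extSeq_ext1, extSeq_ext1, if_pos (by omega), if_pos (by omega)]; exact h1, by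
        rw [extSeq_ext1, extSeq_ext1, if_pos (by omega), if_pos (by omega)]; exact h2⟩
    · refine ⟨k - 1, by omega, ?_, ?_⟩
      · rw [extSeq_ext1, extSeq_ext1, if_pos (by omega), if_pos (by omega)]
        have h3 : k - 1 + 1 = k := by omega
        rw [h3]
        exact h1
      · rw [extSeq_ext1, extSeq_ext1, if_pos (by omega),
            if_neg (by omega), if_pos (by omega)]
        have h3 : k - 1 + 1 = k := by omega
        have h4 : k - 1 + 2 = k + 1 := by omega
        rw [h3]
        exact h2

lemma extSeq_trunc1 {m : ℕ} (e : Fin (m+1) → Fin (m+1)) (he : IsInvSeq e) (i : ℕ)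
    (hi : i < m) : extSeq (trunc1 e) i = extSeq e i := by
  conv_rhs => rw [← ext1_trunc1 e he]
  rw [extSeq_ext1, if_pos hi]

lemma isInvSeq_trunc1 {m : ℕ} (e : Fin (m+1) → Fin (m+1)) : IsInvSeq (trunc1 e) := by
  intro i
  simpa [trunc1] using Nat.min_le_right _ _

lemma extSeq_eq_val {m : ℕ} (e : Fin m → Fin m) (i : ℕ) (h : i < m) :
    extSeq e i = (e ⟨i, h⟩ : ℕ) := by
  rw [extSeq, dif_pos h]

lemma cntA_split (n : ℕ) : cntA (n + 2) = cntEq n + cntNe n := by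
  rw [cntA, cntEq, cntNe]
  have h := Finset.card_filter_add_card_filter_not
    (s := univ.filter fun e : Fin (n+2) → Fin (n+2) => IsInvSeq e ∧ ¬ Contains000 e)
    (fun e => extSeq e n = extSeq e (n+1))
  rw [Finset.filter_filter, Finset.filter_filter] at h
  exact h.symm

lemma cntEq_succ (n : ℕ) : cntEq (n+1) = cntNe n := by
  rw [cntEq, cntNe]
  refine Finset.card_bij' (fun e _ => trunc1 e)
    (fun f _ => ext1 f ⟨extSeq f (n+1), by have := extSeq_lt f (n+1); omega⟩)
    ?_ ?_ ?_ ?_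
  · intro e he
    simp only [Finset.mem_filter, Finset.mem_univ, true_and] at he ⊢
    obtain ⟨⟨hinv, havoid⟩, heq⟩ := he
    refine ⟨⟨isInvSeq_trunc1 e, ?_⟩, ?_⟩
    · rintro ⟨i, hi, h1, h2⟩
      rw [extSeq_trunc1 e hinv _ (by omega), extSeq_trunc1 e hinv _ (by omega)] at h1
      rw [extSeq_trunc1 e hinv _ (by omega), extSeq_trunc1 e hinv _ (by omega)] at h2
      exact havoid ⟨i, by omega, h1, h2⟩
    · rw [extSeq_trunc1 e hinv _ (by omega), extSeq_trunc1 e hinv _ (by omega)]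
      intro hne
      exact havoid ⟨n, by omega, hne, heq⟩
  · intro f hf
    simp only [Finset.mem_filter, Finset.mem_univ, true_and] at hf ⊢
    obtain ⟨⟨hinv, havoid⟩, hne⟩ := hf
    refine ⟨⟨(isInvSeq_ext1 f _).mpr hinv, ?_⟩, ?_⟩
    · rw [contains000_ext1]
      rintro (hc | ⟨-, h1, h2⟩)
      · exact havoid hc
      · rw [show n + 1 - 1 = n from by omega] at h1
        exact hne h1
    · rw [extSeq_ext1, extSeq_ext1, if_pos (by omega), if_neg (by omega), if_pos rfl]
  · intro e he
    simp only [Finset.mem_filter, Finset.mem_univ, true_and] at he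
    obtain ⟨⟨hinv, havoid⟩, heq⟩ := he
    have hv : (⟨extSeq (trunc1 e) (n+1), by have := extSeq_lt (trunc1 e) (n+1); omega⟩ :
        Fin (n+3)) = e (Fin.last (n+2)) := by
      apply Fin.ext
      have h1 : extSeq (trunc1 e) (n+1) = extSeq e (n+1) := extSeq_trunc1 e hinv _ (by omega)
      have h2 : extSeq e (n+2) = (e ⟨n+2, by omega⟩ : ℕ) := extSeq_eq_val e _ (by omega)
      have h3 : e (Fin.last (n+2)) = e ⟨n+2, by omega⟩ := by congr 1
      simp only [h3]
      rw [h1, heq, h2]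
    show ext1 (trunc1 e) _ = e
    rw [hv]
    exact ext1_trunc1 e hinv
  · intro f hf
    simp only [Finset.mem_filter, Finset.mem_univ, true_and] at hf
    exact trunc1_ext1 f hf.1.1 _

lemma cntNe_eq (n : ℕ) : cntNe n = (n+1) * cntA (n+1) := by
  rw [cntNe, cntA]
  have hmap : ∀ e ∈ (univ.filter fun e : Fin (n+2) → Fin (n+2) =>
      (IsInvSeq e ∧ ¬ Contains000 e) ∧ ¬ extSeq e n = extSeq e (n+1)),
      trunc1 e ∈ (univ.filter fun f : Fin (n+1) → Fin (n+1) =>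
        IsInvSeq f ∧ ¬ Contains000 f) := by
    intro e he
    simp only [Finset.mem_filter, Finset.mem_univ, true_and] at he ⊢
    obtain ⟨⟨hinv, havoid⟩, hne⟩ := he
    refine ⟨isInvSeq_trunc1 e, ?_⟩
    rintro ⟨i, hi, h1, h2⟩
    rw [extSeq_trunc1 e hinv _ (by omega), extSeq_trunc1 e hinv _ (by omega)] at h1
    rw [extSeq_trunc1 e hinv _ (by omega), extSeq_trunc1 e hinv _ (by omega)] at h2
    exact havoid ⟨i, by omega, h1, h2⟩
  rw [Finset.card_eq_sum_card_fiberwise hmap]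
  have hfib : ∀ f ∈ (univ.filter fun f : Fin (n+1) → Fin (n+1) =>
      IsInvSeq f ∧ ¬ Contains000 f),
      ((univ.filter fun e : Fin (n+2) → Fin (n+2) =>
        (IsInvSeq e ∧ ¬ Contains000 e) ∧ ¬ extSeq e n = extSeq e (n+1)).filter
        fun e => trunc1 e = f).card = n + 1 := by
    intro f hf
    simp only [Finset.mem_filter, Finset.mem_univ, true_and] at hf
    obtain ⟨hinv, havoid⟩ := hf
    have hpivlt : extSeq f n < n + 2 := by have := extSeq_lt f n; omega
    have hcard : ((univ : Finset (Fin (n+2))).erase ⟨extSeq f n, hpivlt⟩).card = n + 1 := by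
      rw [Finset.card_erase_of_mem (Finset.mem_univ _), Finset.card_univ]
      simp
    refine Eq.trans (Finset.card_bij'
      (fun e _ => e (Fin.last (n+1))) (fun v _ => ext1 f v) ?_ ?_ ?_ ?_) hcard
    · intro e he
      simp only [Finset.mem_filter, Finset.mem_univ, true_and] at he
      obtain ⟨⟨⟨hinv', havoid'⟩, hne'⟩, htr⟩ := he
      rw [Finset.mem_erase]
      refine ⟨?_, Finset.mem_univ _⟩
      show e (Fin.last (n+1)) ≠ ⟨extSeq f n, hpivlt⟩
      intro hcontra
      apply hne'
      have h1 : extSeq e (n+1) = (e ⟨n+1, by omega⟩ : ℕ) := extSeq_eq_val e _ (by omega)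
      have h2 : e (Fin.last (n+1)) = e ⟨n+1, by omega⟩ := by congr 1
      have h3 : extSeq f n = extSeq e n := by
        rw [← htr]; exact (extSeq_trunc1 e hinv' _ (by omega))
      have h4 : (e (Fin.last (n+1)) : ℕ) = extSeq f n := by rw [hcontra]
      rw [h1, ← h2, h4, h3]
    · intro v hv
      rw [Finset.mem_erase] at hv
      have hvne : (v : ℕ) ≠ extSeq f n := by
        intro hc
        exact hv.1 (Fin.ext hc)
      simp only [Finset.mem_filter, Finset.mem_univ, true_and]
      refine ⟨⟨⟨(isInvSeq_ext1 f _).mpr hinv, ?_⟩, ?_⟩, trunc1_ext1 f hinv _⟩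
      · rw [contains000_ext1]
        rintro (hc | ⟨-, -, h2⟩)
        · exact havoid hc
        · exact hvne h2.symm
      · rw [extSeq_ext1, extSeq_ext1, if_pos (by omega), if_neg (by omega), if_pos rfl]
        intro hc
        exact hvne hc.symm
    · intro e he
      simp only [Finset.mem_filter, Finset.mem_univ, true_and] at he
      obtain ⟨⟨⟨hinv', -⟩, -⟩, htr⟩ := he
      show ext1 f (e (Fin.last (n+1))) = e
      rw [← htr]
      exact ext1_trunc1 e hinv'
    · intro v hv
      simp [ext1, Fin.last]
  rw [Finset.sum_congr rfl hfib, Finset.sum_const, smul_eq_mul, mul_comm]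

lemma cntA_one : cntA 1 = 1 := by decide
lemma cntA_two : cntA 2 = 2 := by decide

theorem stmt0 :
    I000 1 = 1 ∧ I000 2 = 2 ∧
      ∀ n : ℕ, 3 ≤ n → I000 n = (n - 1) * I000 (n - 1) + (n - 2) * I000 (n - 2) := by
  refine ⟨by rw [I000_eq_cntA]; exact cntA_one, by rw [I000_eq_cntA]; exact cntA_two, ?_⟩
  intro n hn
  obtain ⟨k, rfl⟩ : ∃ k, n = k + 3 := ⟨n - 3, by omega⟩
  simp only [I000_eq_cntA]
  rw [show k + 3 - 1 = k + 2 from by omega, show k + 3 - 2 = k + 1 from by omega]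
  have h := cntA_split (k + 1)
  rw [cntEq_succ k, cntNe_eq k, cntNe_eq (k + 1)] at h
  rw [show k + 3 = k + 1 + 2 from rfl, h, show k + 1 + 1 = k + 2 from rfl]
  ring
end

section
/- For n ≥ r ≥ 2, the number of inversion sequences of length n avoiding the consecutive pattern consisting of r equal entries satisfies |I_n(0^r)| = Σ_{j=1}^{r-1} (n-j)|I_{n-j}(0^r)|, with initial conditions |I_n(0^r)| = n! for 1 ≤ n < r. -/
/-- `e` contains the consecutive pattern `0^r`, i.e. `r` consecutive equal entries. -/
def ContainsZeros (r : ℕ) {n : ℕ} (e : Fin n → Fin n) : Prop :=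
  ∃ i : ℕ, i + r ≤ n ∧ ∀ j < r, extSeq e (i + j) = extSeq e i

/-- The number of inversion sequences of length `n` avoiding `0^r`. -/
noncomputable def IZeros (r n : ℕ) : ℕ :=
  Nat.card {e : Fin n → Fin n // IsInvSeq e ∧ ¬ ContainsZeros r e}

namespace InvAux

/-- ℕ-valued reformulation of avoiding inversion sequences. -/
def P (r n : ℕ) (f : ℕ → ℕ) : Prop :=
  (∀ i, n ≤ i → f i = 0) ∧ (∀ i, i < n → f i ≤ i) ∧
    ¬ ∃ i : ℕ, i + r ≤ n ∧ ∀ j < r, f (i + j) = f i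

noncomputable def equivP (r n : ℕ) :
    {e : Fin n → Fin n // IsInvSeq e ∧ ¬ ContainsZeros r e} ≃ {f : ℕ → ℕ // P r n f} where
  toFun e := ⟨extSeq e.1, by
    obtain ⟨e, h1, h2⟩ := e
    refine ⟨fun i hi => by simp [extSeq, Nat.not_lt.2 hi], fun i hi => ?_, h2⟩
    simpa [extSeq, hi] using h1 ⟨i, hi⟩⟩
  invFun f := ⟨fun i => ⟨f.1 i, lt_of_le_of_lt (f.2.2.1 i i.isLt) i.isLt⟩, by
    obtain ⟨f, h1, h2, h3⟩ := f
    refine ⟨fun i => h2 i i.isLt, ?_⟩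
    intro hC
    have hx : extSeq (fun i : Fin n => (⟨f i, lt_of_le_of_lt (h2 i i.isLt) i.isLt⟩ : Fin n)) = f := by
      funext i
      unfold extSeq
      split
      · rfl
      · exact (h1 i (Nat.not_lt.1 (by assumption))).symm
    unfold ContainsZeros at hC
    rw [hx] at hC
    exact h3 hC⟩
  left_inv e := by
    apply Subtype.ext
    funext i
    apply Fin.ext
    show extSeq e.1 i.1 = _
    simp [extSeq, i.isLt]
  right_inv f := by
    apply Subtype.ext
    funext i
    show extSeq _ i = f.1 i
    unfold extSeq
    split
    · rfl
    · exact (f.2.1 i (Nat.not_lt.1 (by assumption))).symm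

instance (r n : ℕ) : Finite {f : ℕ → ℕ // P r n f} := Finite.of_equiv _ (equivP r n)

lemma IZeros_eq (r n : ℕ) : IZeros r n = Nat.card {f : ℕ → ℕ // P r n f} :=
  Nat.card_congr (equivP r n)

def equivPi (r n : ℕ) (hn : n < r) : {f : ℕ → ℕ // P r n f} ≃ ∀ i : Fin n, Fin (i + 1) where
    toFun f i := ⟨f.1 i, Nat.lt_succ_of_le (f.2.2.1 i i.isLt)⟩
    invFun g := ⟨fun i => if h : i < n then (g ⟨i, h⟩ : ℕ) else 0, by
      refine ⟨fun i hi => by simp [Nat.not_lt.2 hi], fun i hi => ?_, ?_⟩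
      · simpa [hi] using Nat.lt_succ_iff.mp (g ⟨i, hi⟩).isLt
      · rintro ⟨i, hir, -⟩; omega⟩
    left_inv f := by
      apply Subtype.ext
      funext i
      show (if h : i < n then f.1 i else 0) = f.1 i
      split
      · rfl
      · exact (f.2.1 i (Nat.not_lt.1 (by assumption))).symm
    right_inv g := by
      funext i
      apply Fin.ext
      simp [i.isLt]

lemma card_small (r n : ℕ) (hn : n < r) : IZeros r n = n.factorial := by
  rw [IZeros_eq, Nat.card_congr (equivPi r n hn), Nat.card_pi]
  simp only [Nat.card_eq_fintype_card, Fintype.card_fin]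
  rw [Fin.prod_univ_eq_prod_range (fun i => i + 1) n]
  exact Finset.prod_range_add_one_eq_factorial n

/-! ### The recurrence -/

def Q (n : ℕ) (f : ℕ → ℕ) (k : ℕ) : Prop := ∀ i, k ≤ i → i < n → f i = f (n - 1)

lemma exQ (n : ℕ) (f : ℕ → ℕ) : ∃ k, Q n f k :=
  ⟨n, fun i h1 h2 => absurd h2 (by omega)⟩

noncomputable def kf (n : ℕ) (f : ℕ → ℕ) : ℕ := sInf {k | Q n f k}

lemma kf_spec (n : ℕ) (f : ℕ → ℕ) : Q n f (kf n f) :=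
  Nat.sInf_mem (exQ n f)

lemma kf_le {n : ℕ} {f : ℕ → ℕ} {k : ℕ} (h : Q n f k) : kf n f ≤ k :=
  Nat.sInf_le h

lemma kf_not {n : ℕ} {f : ℕ → ℕ} {k : ℕ} (h : k < kf n f) : ¬ Q n f k :=
  Nat.notMem_of_lt_sInf h

lemma kf_bounds {r n : ℕ} {f : ℕ → ℕ} (hr : 2 ≤ r) (hn : r ≤ n) (hP : P r n f) :
    n + 1 - r ≤ kf n f ∧ kf n f ≤ n - 1 ∧ f (kf n f - 1) ≠ f (n - 1) := by
  have hub : kf n f ≤ n - 1 := kf_le (fun i h1 h2 => by congr 1; omega)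
  have hlb : n + 1 - r ≤ kf n f := by
    by_contra h
    push_neg at h
    exact hP.2.2 ⟨kf n f, by omega, fun j hj => by
      rw [kf_spec n f (kf n f + j) (by omega) (by omega),
          kf_spec n f (kf n f) le_rfl (by omega)]⟩
  refine ⟨hlb, hub, ?_⟩
  have h2 := kf_not (show kf n f - 1 < kf n f by omega)
  intro he
  apply h2
  intro i hi hin
  rcases eq_or_lt_of_le hi with h | h
  · rw [← h]; exact he
  · exact kf_spec n f i (by omega) hin

lemma kf_eq_iff {r n j : ℕ} {f : ℕ → ℕ} (hr : 2 ≤ r) (hn : r ≤ n) (hP : P r n f)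
    (hj1 : 1 ≤ j) (hj2 : j ≤ r - 1) :
    n - kf n f = j ↔
      ((∀ i, n - j ≤ i → i < n → f i = f (n - 1)) ∧ f (n - j - 1) ≠ f (n - 1)) := by
  obtain ⟨hk1, hk2, hk3⟩ := kf_bounds hr hn hP
  constructor
  · intro h
    have hk : kf n f = n - j := by omega
    rw [← hk]
    exact ⟨fun i hi hin => kf_spec n f i hi hin, hk3⟩
  · rintro ⟨hc, hne⟩
    have hle : kf n f ≤ n - j := kf_le hc
    have hnlt : ¬ kf n f < n - j := fun hlt =>
      hne (kf_spec n f (n - j - 1) (by omega) (by omega))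
    omega

def Bmem (r n j : ℕ) (f : ℕ → ℕ) : Prop :=
  P r n f ∧ (∀ i, n - j ≤ i → i < n → f i = f (n - 1)) ∧ f (n - j - 1) ≠ f (n - 1)

/-- truncation to length `m` -/
def trunc (m : ℕ) (f : ℕ → ℕ) : ℕ → ℕ := fun i => if i < m then f i else 0

/-- extension of `f` (of length `m`) by constant `c` up to length `n` -/
def ext (m n c : ℕ) (f : ℕ → ℕ) : ℕ → ℕ := fun i => if i < m then f i else if i < n then c else 0

lemma trunc_lt {m i : ℕ} (f : ℕ → ℕ) (h : i < m) : trunc m f i = f i := if_pos h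

lemma trunc_ge {m i : ℕ} (f : ℕ → ℕ) (h : m ≤ i) : trunc m f i = 0 := if_neg (by omega)

lemma ext_lt {m n c i : ℕ} (f : ℕ → ℕ) (h : i < m) : ext m n c f i = f i := if_pos h

lemma ext_mid {m n c i : ℕ} (f : ℕ → ℕ) (h1 : m ≤ i) (h2 : i < n) : ext m n c f i = c := by
  unfold ext; rw [if_neg (by omega), if_pos h2]

lemma ext_ge {m n c i : ℕ} (f : ℕ → ℕ) (hmn : m ≤ n) (h : n ≤ i) : ext m n c f i = 0 := by
  unfold ext; rw [if_neg (by omega), if_neg (by omega)]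

noncomputable def equivB (r n j : ℕ) (hr : 2 ≤ r) (hn : r ≤ n) (hj1 : 1 ≤ j) (hj2 : j ≤ r - 1) :
    {f : ℕ → ℕ // Bmem r n j f} ≃ {f : ℕ → ℕ // P r (n - j) f} × Fin (n - j) where
  toFun f :=
    (⟨trunc (n - j) f.1, by
      obtain ⟨f, ⟨hsup, hbd, hrun⟩, hconst, hne⟩ := f
      refine ⟨fun i hi => trunc_ge f hi, fun i hi => ?_, ?_⟩
      · rw [trunc_lt f hi]; exact hbd i (by omega)
      · rintro ⟨i, hir, hcon⟩
        apply hrun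
        refine ⟨i, by omega, fun j' hj' => ?_⟩
        have h := hcon j' hj'
        rwa [trunc_lt f (by omega), trunc_lt f (by omega)] at h⟩,
    ⟨if f.1 (n - j) < f.1 (n - j - 1) then f.1 (n - j) else f.1 (n - j) - 1, by
      obtain ⟨f, ⟨hsup, hbd, hrun⟩, hconst, hne⟩ := f
      have hc : f (n - j) ≤ n - j := hbd (n - j) (by omega)
      have hv : f (n - j - 1) ≤ n - j - 1 := hbd (n - j - 1) (by omega)
      have h1 : f (n - j) = f (n - 1) := hconst (n - j) le_rfl (by omega)
      have hcv : f (n - j) ≠ f (n - j - 1) := by omega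
      dsimp only
      split <;> omega⟩)
  invFun gd :=
    ⟨ext (n - j) n (if (gd.2 : ℕ) < gd.1.1 (n - j - 1) then (gd.2 : ℕ) else (gd.2 : ℕ) + 1)
      gd.1.1, by
      obtain ⟨⟨g, hsup, hbd, hrun⟩, d⟩ := gd
      set c := if (d : ℕ) < g (n - j - 1) then (d : ℕ) else (d : ℕ) + 1 with hcdef
      have hd : (d : ℕ) < n - j := d.isLt
      have hv : g (n - j - 1) ≤ n - j - 1 := hbd (n - j - 1) (by omega)
      have hc1 : c ≤ n - j := by rw [hcdef]; split <;> omega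
      have hcv : c ≠ g (n - j - 1) := by rw [hcdef]; split <;> omega
      refine ⟨⟨fun i hi => ext_ge g (by omega) hi, fun i hi => ?_, ?_⟩, ?_, ?_⟩
      · by_cases h : i < n - j
        · rw [ext_lt g h]; exact hbd i h
        · rw [ext_mid g (by omega) hi]; omega
      · rintro ⟨i, hir, hcon⟩
        by_cases h1 : i + r ≤ n - j
        · apply hrun
          refine ⟨i, h1, fun j' hj' => ?_⟩
          have h := hcon j' hj'
          rwa [ext_lt g (by omega), ext_lt g (by omega)] at h
        · by_cases h2 : n - j ≤ i
          · omega
          · push_neg at h1 h2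
            have e1 := hcon (n - j - 1 - i) (by omega)
            have e2 := hcon (n - j - i) (by omega)
            rw [show i + (n - j - 1 - i) = n - j - 1 by omega,
              ext_lt g (by omega), ext_lt g h2] at e1
            rw [show i + (n - j - i) = n - j by omega,
              ext_mid g le_rfl (by omega), ext_lt g h2] at e2
            exact hcv (by omega)
      · intro i hi1 hi2
        rw [ext_mid g hi1 hi2, ext_mid g (by omega) (by omega)]
      · rw [ext_lt g (by omega), ext_mid g (by omega) (by omega)]
        exact fun h => hcv h.symm⟩
  left_inv f := by
    obtain ⟨f, ⟨hsup, hbd, hrun⟩, hconst, hne⟩ := f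
    apply Subtype.ext
    show ext (n - j) n
        (if (if f (n - j) < f (n - j - 1) then f (n - j) else f (n - j) - 1)
              < trunc (n - j) f (n - j - 1)
          then (if f (n - j) < f (n - j - 1) then f (n - j) else f (n - j) - 1)
          else (if f (n - j) < f (n - j - 1) then f (n - j) else f (n - j) - 1) + 1)
        (trunc (n - j) f) = f
    rw [trunc_lt f (show n - j - 1 < n - j by omega)]
    funext i
    have hc : f (n - j) ≤ n - j := hbd (n - j) (by omega)
    have hv : f (n - j - 1) ≤ n - j - 1 := hbd (n - j - 1) (by omega)
    have h1 : f (n - j) = f (n - 1) := hconst (n - j) le_rfl (by omega)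
    have hcv : f (n - j) ≠ f (n - j - 1) := by omega
    by_cases hi1 : i < n - j
    · rw [ext_lt _ hi1, trunc_lt f hi1]
    · by_cases hi2 : i < n
      · rw [ext_mid _ (by omega) hi2]
        have hfi : f i = f (n - j) := by
          rw [hconst i (by omega) hi2, h1]
        rw [hfi]
        split <;> (try split) <;> omega
      · rw [ext_ge _ (by omega) (by omega), hsup i (by omega)]
  right_inv gd := by
    obtain ⟨⟨g, hsup, hbd, hrun⟩, d⟩ := gd
    have hd : (d : ℕ) < n - j := d.isLt
    have hv : g (n - j - 1) ≤ n - j - 1 := hbd (n - j - 1) (by omega)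
    have hgt : trunc (n - j)
        (ext (n - j) n (if (d : ℕ) < g (n - j - 1) then (d : ℕ) else (d : ℕ) + 1) g) = g := by
      funext i
      by_cases h : i < n - j
      · rw [trunc_lt _ h, ext_lt g h]
      · rw [trunc_ge _ (by omega), hsup i (by omega)]
    refine Prod.ext ?_ ?_
    · exact Subtype.ext hgt
    · apply Fin.ext
      show (if ext (n - j) n (if (d : ℕ) < g (n - j - 1) then (d : ℕ) else (d : ℕ) + 1) g (n - j)
              < ext (n - j) n (if (d : ℕ) < g (n - j - 1) then (d : ℕ) else (d : ℕ) + 1) g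
                (n - j - 1)
          then ext (n - j) n (if (d : ℕ) < g (n - j - 1) then (d : ℕ) else (d : ℕ) + 1) g (n - j)
          else ext (n - j) n (if (d : ℕ) < g (n - j - 1) then (d : ℕ) else (d : ℕ) + 1) g (n - j)
            - 1) = (d : ℕ)
      rw [ext_mid g le_rfl (by omega), ext_lt g (show n - j - 1 < n - j by omega)]
      split <;> (try split) <;> omega

lemma card_rec (r n : ℕ) (hr : 2 ≤ r) (hn : r ≤ n) :
    IZeros r n = ∑ j ∈ Finset.Icc 1 (r - 1), (n - j) * IZeros r (n - j) := by
  classical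
  have hfin : ({f : ℕ → ℕ | P r n f}).Finite :=
    Set.finite_coe_iff.mp (inferInstance : Finite {f : ℕ → ℕ // P r n f})
  have hmem : ∀ f, f ∈ hfin.toFinset ↔ P r n f := fun f => hfin.mem_toFinset
  have hmap : ∀ f ∈ hfin.toFinset, n - kf n f ∈ Finset.Icc 1 (r - 1) := by
    intro f hf
    obtain ⟨h1, h2, _⟩ := kf_bounds hr hn ((hmem f).1 hf)
    rw [Finset.mem_Icc]
    omega
  have hcard := Finset.card_eq_sum_card_fiberwise hmap
  have hI : IZeros r n = hfin.toFinset.card := by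
    rw [IZeros_eq]
    have h := Nat.card_coe_set_eq {f : ℕ → ℕ | P r n f}
    rw [Set.ncard_eq_toFinset_card _ hfin] at h
    exact h
  have hfib : ∀ j ∈ Finset.Icc 1 (r - 1),
      (hfin.toFinset.filter (fun f => n - kf n f = j)).card = (n - j) * IZeros r (n - j) := by
    intro j hj
    rw [Finset.mem_Icc] at hj
    have hset : (↑(hfin.toFinset.filter (fun f => n - kf n f = j)) : Set (ℕ → ℕ))
        = {f : ℕ → ℕ | Bmem r n j f} := by
      ext f
      simp only [Finset.coe_filter, Set.mem_setOf_eq, hmem]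
      constructor
      · rintro ⟨hP, hkf⟩
        exact ⟨hP, (kf_eq_iff hr hn hP hj.1 hj.2).1 hkf⟩
      · rintro ⟨hP, hC⟩
        exact ⟨hP, (kf_eq_iff hr hn hP hj.1 hj.2).2 hC⟩
    rw [← Set.ncard_coe_finset, hset]
    have h2 : ({f : ℕ → ℕ | Bmem r n j f}).ncard = Nat.card {f : ℕ → ℕ // Bmem r n j f} :=
      (Nat.card_coe_set_eq _).symm
    rw [h2, Nat.card_congr (equivB r n j hr hn hj.1 hj.2), Nat.card_prod, ← IZeros_eq,
      Nat.card_eq_fintype_card, Fintype.card_fin, mul_comm]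
  rw [hI, hcard, Finset.sum_congr rfl hfib]

end InvAux

theorem stmt1 (r : ℕ) (hr : 2 ≤ r) :
    (∀ n : ℕ, r ≤ n →
      IZeros r n = ∑ j ∈ Finset.Icc 1 (r - 1), (n - j) * IZeros r (n - j)) ∧
    (∀ n : ℕ, 1 ≤ n → n < r → IZeros r n = n.factorial) :=
  ⟨fun n hn => InvAux.card_rec r n hr hn, fun n _ h2 => InvAux.card_small r n h2⟩
end

section
/- For all n ≥ 1, the number of inversion sequences of length n with no three consecutive equal entries equals ((n+1)! - d_{n+1})/n, where d_m denotes the number of derangements of {1,...,m}. -/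
open Finset

instance {n : ℕ} : DecidablePred (@IsInvSeq n) :=
  fun _ => Fintype.decidableForallFintype

instance inst_s2 {n : ℕ} (e : Fin n → Fin n) : Decidable (Contains000 e) :=
  decidable_of_iff (∃ i < n, i + 2 < n ∧ extSeq e i = extSeq e (i + 1) ∧
      extSeq e (i + 1) = extSeq e (i + 2))
    ⟨fun ⟨i, _, h⟩ => ⟨i, h⟩, fun ⟨i, h⟩ => ⟨i, by omega, h⟩⟩

def EndsInPair {n : ℕ} (e : Fin n → Fin n) : Prop :=
  2 ≤ n ∧ extSeq e (n - 2) = extSeq e (n - 1)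

instance {n : ℕ} (e : Fin n → Fin n) : Decidable (EndsInPair e) :=
  inferInstanceAs (Decidable (_ ∧ _))

def snocSeq {n : ℕ} (e : Fin n → Fin n) (v : Fin (n + 1)) : Fin (n + 1) → Fin (n + 1) :=
  Fin.snoc (Fin.castSucc ∘ e) v

/-- The `min` only matters off inversion sequences, where it keeps the values in range. -/
def initSeq {n : ℕ} (f : Fin (n + 1) → Fin (n + 1)) : Fin n → Fin n :=
  fun i => ⟨min (f i.castSucc) i, (min_le_right _ _).trans_lt i.isLt⟩

section Extension

variable {n : ℕ}

lemma extSeq_lt_succ (e : Fin n → Fin n) (i : ℕ) : extSeq e i < n + 1 := by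
  unfold extSeq; split <;> omega

lemma extSeq_snocSeq_of_lt (e : Fin n → Fin n) (v : Fin (n + 1)) {i : ℕ} (hi : i < n) :
    extSeq (snocSeq e v) i = extSeq e i := by
  simp [extSeq, hi, Nat.lt_succ_of_lt hi, snocSeq, Fin.snoc]

lemma extSeq_snocSeq_self (e : Fin n → Fin n) (v : Fin (n + 1)) :
    extSeq (snocSeq e v) n = v := by
  simp [extSeq, snocSeq, Fin.snoc]

lemma isInvSeq_snocSeq {e : Fin n → Fin n} (he : IsInvSeq e) (v : Fin (n + 1)) :
    IsInvSeq (snocSeq e v) := by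
  intro i
  induction i using Fin.lastCases with
  | last => simpa [snocSeq] using Nat.le_of_lt_succ v.isLt
  | cast i => simpa [snocSeq] using he i

lemma isInvSeq_initSeq (f : Fin (n + 1) → Fin (n + 1)) : IsInvSeq (initSeq f) :=
  fun _ => min_le_right _ _

lemma initSeq_snocSeq {e : Fin n → Fin n} (he : IsInvSeq e) (v : Fin (n + 1)) :
    initSeq (snocSeq e v) = e := by
  ext i
  simpa [initSeq, snocSeq] using he i

lemma snocSeq_initSeq {f : Fin (n + 1) → Fin (n + 1)} (hf : IsInvSeq f) :
    snocSeq (initSeq f) (f (Fin.last n)) = f := by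
  ext i
  induction i using Fin.lastCases with
  | last => simp [snocSeq]
  | cast i => simpa [snocSeq, initSeq] using hf i.castSucc

lemma contains000_snocSeq_iff (e : Fin n → Fin n) (v : Fin (n + 1)) :
    Contains000 (snocSeq e v) ↔
      Contains000 e ∨ (EndsInPair e ∧ (v : ℕ) = extSeq e (n - 1)) := by
  have hlt : ∀ {i}, i < n → _ := extSeq_snocSeq_of_lt e v
  have hself := extSeq_snocSeq_self e v
  constructor
  · rintro ⟨i, hi, h₁, h₂⟩
    rcases Nat.lt_succ_iff_lt_or_eq.mp hi with hi | rfl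
    · exact .inl ⟨i, hi, by rwa [hlt (by omega), hlt (by omega)] at h₁,
        by rwa [hlt (by omega), hlt (by omega)] at h₂⟩
    · refine .inr ⟨⟨by omega, ?_⟩, ?_⟩
      · simpa [hlt] using h₁
      · simpa [hlt, hself] using h₂.symm
  · rintro (⟨i, hi, h₁, h₂⟩ | ⟨⟨hn, h₁⟩, h₂⟩)
    · exact ⟨i, by omega, by rwa [hlt (by omega), hlt (by omega)],
        by rwa [hlt (by omega), hlt (by omega)]⟩
    · obtain ⟨m, rfl⟩ : ∃ m, n = m + 2 := ⟨n - 2, by omega⟩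
      refine ⟨m, by omega, ?_, ?_⟩
      · simpa [hlt] using h₁
      · simpa [hlt, hself] using h₂.symm

lemma endsInPair_snocSeq_iff (e : Fin n → Fin n) (v : Fin (n + 1)) :
    EndsInPair (snocSeq e v) ↔ 1 ≤ n ∧ (v : ℕ) = extSeq e (n - 1) := by
  unfold EndsInPair
  rcases Nat.eq_zero_or_pos n with rfl | hn
  · simp
  · rw [show n + 1 - 2 = n - 1 by omega, extSeq_snocSeq_of_lt _ _ (by omega),
      Nat.add_sub_cancel, extSeq_snocSeq_self, eq_comm]
    exact and_congr_left fun _ => by omega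

end Extension

def avoiders (n : ℕ) : Finset (Fin n → Fin n) :=
  {e | IsInvSeq e ∧ ¬Contains000 e}

lemma mem_avoiders {n : ℕ} {e : Fin n → Fin n} :
    e ∈ avoiders n ↔ IsInvSeq e ∧ ¬Contains000 e := by
  simp [avoiders]

lemma I000_eq_card_avoiders (n : ℕ) : I000 n = #(avoiders n) := by
  rw [I000, Nat.card_eq_fintype_card, Fintype.card_subtype, avoiders]

lemma Fin.card_filter_val_eq {k c : ℕ} (hc : c < k) : #{v : Fin k | (v : ℕ) = c} = 1 := by
  rw [card_eq_one]
  exact ⟨⟨c, hc⟩, by ext; simp [Fin.ext_iff]⟩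

section Counting

variable {n : ℕ}

lemma card_filter_avoiders_succ (Q : (Fin (n + 1) → Fin (n + 1)) → Prop) [DecidablePred Q] :
    #{f ∈ avoiders (n + 1) | Q f} = ∑ e ∈ avoiders n,
      #{v : Fin (n + 1) | ¬(EndsInPair e ∧ (v : ℕ) = extSeq e (n - 1)) ∧ Q (snocSeq e v)} := by
  rw [← card_sigma]
  symm
  refine card_nbij' (fun p => snocSeq p.1 p.2) (fun f => ⟨initSeq f, f (Fin.last n)⟩)
    ?_ ?_ ?_ ?_
  · rintro ⟨e, v⟩ hp
    simp only [coe_sigma, Set.mem_sigma_iff, mem_coe, mem_avoiders, mem_filter, mem_univ,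
      true_and] at hp ⊢
    obtain ⟨⟨he, hc⟩, hv, hQ⟩ := hp
    exact ⟨⟨isInvSeq_snocSeq he v, by rw [contains000_snocSeq_iff]; tauto⟩, hQ⟩
  · intro f hf
    simp only [coe_sigma, Set.mem_sigma_iff, mem_coe, mem_avoiders, mem_filter, mem_univ,
      true_and] at hf ⊢
    obtain ⟨⟨hi, hc⟩, hQ⟩ := hf
    rw [← snocSeq_initSeq hi, contains000_snocSeq_iff] at hc
    rw [snocSeq_initSeq hi]
    exact ⟨⟨isInvSeq_initSeq f, by tauto⟩, by tauto, hQ⟩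
  · rintro ⟨e, v⟩ hp
    simp only [coe_sigma, Set.mem_sigma_iff, mem_coe, mem_avoiders] at hp
    exact Sigma.ext (initSeq_snocSeq hp.1.1 v) (heq_of_eq (by simp [snocSeq]))
  · intro f hf
    exact snocSeq_initSeq (mem_avoiders.mp (mem_filter.mp hf).1).1

lemma card_filter_avoiders_succ_not_endsInPair (hn : 1 ≤ n) :
    #{f ∈ avoiders (n + 1) | ¬EndsInPair f} = n * #(avoiders n) := by
  rw [card_filter_avoiders_succ, card_eq_sum_ones (avoiders n), mul_sum, mul_one]
  refine sum_congr rfl fun e _ => ?_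
  have hsplit := card_filter_add_card_filter_not (s := (univ : Finset (Fin (n + 1))))
    (fun v => (v : ℕ) = extSeq e (n - 1))
  rw [Fin.card_filter_val_eq (extSeq_lt_succ e _), Finset.card_univ, Fintype.card_fin] at hsplit
  convert (show #{v : Fin (n + 1) | ¬(v : ℕ) = extSeq e (n - 1)} = n by omega) using 2
  ext v
  simp only [mem_filter, mem_univ, true_and, endsInPair_snocSeq_iff, hn]
  tauto

lemma card_filter_avoiders_succ_endsInPair (hn : 1 ≤ n) :
    #{f ∈ avoiders (n + 1) | EndsInPair f} = #{e ∈ avoiders n | ¬EndsInPair e} := by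
  rw [card_filter_avoiders_succ, card_filter]
  refine sum_congr rfl fun e _ => ?_
  simp only [endsInPair_snocSeq_iff, hn, true_and]
  by_cases h : EndsInPair e
  · simp [h]
  · simpa [h] using Fin.card_filter_val_eq (extSeq_lt_succ e (n - 1))

lemma card_avoiders_add_two (hn : 1 ≤ n) :
    #(avoiders (n + 2)) = (n + 1) * #(avoiders (n + 1)) + n * #(avoiders n) := by
  rw [← card_filter_add_card_filter_not (s := avoiders (n + 2)) EndsInPair,
    card_filter_avoiders_succ_endsInPair (by omega),
    card_filter_avoiders_succ_not_endsInPair hn,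
    card_filter_avoiders_succ_not_endsInPair (by omega)]
  ring

end Counting

lemma card_avoiders_one : #(avoiders 1) = 1 := by decide

lemma card_avoiders_two : #(avoiders 2) = 2 := by decide

lemma succ_mul_card_avoiders_add_numDerangements (n : ℕ) :
    (n + 1) * #(avoiders (n + 1)) + numDerangements (n + 2) = (n + 2).factorial := by
  induction n using Nat.twoStepInduction with
  | zero => rw [card_avoiders_one]; rfl
  | one => rw [card_avoiders_two]; rfl
  | more n ih₀ ih₁ =>
    rw [card_avoiders_add_two (by omega), numDerangements_add_two]
    simp only [Nat.factorial_succ] at ih₀ ih₁ ⊢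
    linear_combination (n + 3) * (ih₀ + ih₁)

/-- `|I_n(000)| = ((n+1)! - d_{n+1})/n`, stated in the equivalent product form
`n * |I_n(000)| = (n+1)! - d_{n+1}` (the division is exact). -/
theorem stmt2 (n : ℕ) (hn : 1 ≤ n) :
    n * I000 n = (n + 1).factorial - numDerangements (n + 1) := by
  obtain ⟨m, rfl⟩ : ∃ m, n = m + 1 := ⟨n - 1, by omega⟩
  rw [I000_eq_card_avoiders]
  exact Nat.eq_sub_of_add_eq (succ_mul_card_avoiders_add_numDerangements m)
end

section
/- For all n ≥ 1 and all 0 ≤ k < n, the number of inversion sequences of length n avoiding the consecutive pattern 110 with last entry equal to k equals the number of inversion sequences of length n avoiding the consecutive pattern 100 with last entry equal to k. In particular, |I_n(110)| = |I_n(100)| for all n, i.e., the patterns 110 and 100 are Wilf equivalent. -/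
/-- `e` contains the consecutive pattern 110: `e_i = e_{i+1} > e_{i+2}`. -/
def Contains110 {n : ℕ} (e : Fin n → Fin n) : Prop :=
  ∃ i : ℕ, i + 2 < n ∧ extSeq e i = extSeq e (i + 1) ∧ extSeq e (i + 2) < extSeq e (i + 1)

/-- `e` contains the consecutive pattern 100: `e_i > e_{i+1} = e_{i+2}`. -/
def Contains100 {n : ℕ} (e : Fin n → Fin n) : Prop :=
  ∃ i : ℕ, i + 2 < n ∧ extSeq e (i + 1) < extSeq e i ∧ extSeq e (i + 1) = extSeq e (i + 2)

namespace Stmt5Aux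

/-- run start: largest `p ≤ j` at which there is an ascent into `p` (or `0`). -/
def rs (f : ℕ → ℕ) (j : ℕ) : ℕ := Nat.findGreatest (fun p => f (p - 1) < f p) j

lemma re_exists (n : ℕ) (f : ℕ → ℕ) (j : ℕ) :
    ∃ q, j ≤ q ∧ (n - 1 ≤ q ∨ f q < f (q + 1)) :=
  ⟨max j (n - 1), le_max_left _ _, Or.inl (le_max_right _ _)⟩

/-- run end: smallest `q ≥ j` at which there is an ascent out of `q` (or `q ≥ n-1`). -/
def re (n : ℕ) (f : ℕ → ℕ) (j : ℕ) : ℕ := Nat.find (re_exists n f j)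

variable {n : ℕ} {f : ℕ → ℕ}

lemma rs_le (j : ℕ) : rs f j ≤ j := Nat.findGreatest_le _

lemma rs_spec {j : ℕ} (h : rs f j ≠ 0) : f (rs f j - 1) < f (rs f j) :=
  Nat.findGreatest_of_ne_zero (P := fun p => f (p - 1) < f p) rfl h

lemma rs_max {j m : ℕ} (h1 : rs f j < m) (h2 : m ≤ j) : ¬ f (m - 1) < f m :=
  Nat.findGreatest_is_greatest (P := fun p => f (p - 1) < f p) h1 h2

lemma rs_eq_self {j : ℕ} (h : f (j - 1) < f j) : rs f j = j :=
  le_antisymm (rs_le j) (Nat.le_findGreatest (P := fun p => f (p - 1) < f p) le_rfl h)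

lemma le_re (j : ℕ) : j ≤ re n f j := (Nat.find_spec (re_exists n f j)).1

lemma re_spec (j : ℕ) : n - 1 ≤ re n f j ∨ f (re n f j) < f (re n f j + 1) :=
  (Nat.find_spec (re_exists n f j)).2

lemma re_min {j q : ℕ} (h1 : j ≤ q) (h2 : q < re n f j) :
    ¬ (n - 1 ≤ q ∨ f q < f (q + 1)) := fun h =>
  Nat.find_min (re_exists n f j) h2 ⟨h1, h⟩

lemma re_le_of {j b : ℕ} (h1 : j ≤ b) (h2 : n - 1 ≤ b ∨ f b < f (b + 1)) :
    re n f j ≤ b := Nat.find_le ⟨h1, h2⟩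

lemma re_eq_self {j : ℕ} (h : n - 1 ≤ j ∨ f j < f (j + 1)) : re n f j = j :=
  le_antisymm (re_le_of le_rfl h) (le_re j)

lemma re_le {j : ℕ} (hj : j ≤ n - 1) : re n f j ≤ n - 1 :=
  re_le_of hj (Or.inl le_rfl)

/-- no ascent strictly inside the run -/
lemma noAsc {j p : ℕ} (h1 : rs f j ≤ p) (h2 : p < re n f j) : f (p + 1) ≤ f p := by
  rcases Nat.lt_or_ge p j with h | h
  · have := rs_max (f := f) (j := j) (m := p + 1) (by omega) (by omega)
    simpa using this
  · have := re_min (n := n) (f := f) (j := j) (q := p) h h2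
    omega

lemma run_anti {j : ℕ} (p q : ℕ) (hp : rs f j ≤ p) (hpq : p ≤ q) (hq : q ≤ re n f j) :
    f q ≤ f p := by
  induction q with
  | zero => have : p = 0 := by omega
            subst this; exact le_rfl
  | succ m ih =>
    rcases Nat.lt_or_ge p (m + 1) with h | h
    · have h1 : f (m + 1) ≤ f m := noAsc (n := n) (j := j) (by omega) (by omega)
      exact h1.trans (ih (by omega) (by omega))
    · have : p = m + 1 := by omega
      subst this; exact le_rfl

lemma rs_congr {j j' : ℕ} (h1 : rs f j ≤ j') (h2 : j' ≤ re n f j) :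
    rs f j' = rs f j := by
  rw [rs, Nat.findGreatest_eq_iff]
  refine ⟨h1, fun h => rs_spec h, fun m hm hm' => ?_⟩
  rcases Nat.lt_or_ge j m with h | h
  · have : f m ≤ f (m - 1) := by
      have := noAsc (n := n) (f := f) (j := j) (p := m - 1) (by have := rs_le (f := f) j; omega)
        (by omega)
      have hm1 : m - 1 + 1 = m := by omega
      rwa [hm1] at this
    omega
  · exact rs_max hm h

lemma re_congr {j j' : ℕ} (hj : j ≤ n - 1) (h1 : rs f j ≤ j') (h2 : j' ≤ re n f j) :
    re n f j' = re n f j := by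
  apply le_antisymm
  · exact re_le_of h2 (re_spec j)
  · by_contra hlt
    push_neg at hlt
    have hq := re_spec (n := n) (f := f) j'
    set q := re n f j' with hqdef
    have hq1 : j' ≤ q := le_re j'
    rcases Nat.lt_or_ge q j with h | h
    · have hna : f (q + 1) ≤ f q := noAsc (n := n) (j := j) (h1.trans hq1) (by omega)
      rcases hq with h' | h'
      · omega
      · omega
    · exact re_min h hlt hq

/-- the bijection on extended sequences -/
def phiF (n : ℕ) (f : ℕ → ℕ) (j : ℕ) : ℕ :=
  f (rs f j) + f (re n f j) - f (rs f j + re n f j - j)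

lemma phiF_run {j p : ℕ} (hj : j ≤ n - 1) (h1 : rs f j ≤ p) (h2 : p ≤ re n f j) :
    phiF n f p = f (rs f j) + f (re n f j) - f (rs f j + re n f j - p) := by
  rw [phiF, rs_congr h1 h2, re_congr hj h1 h2]

lemma phiF_rs_eq {j : ℕ} (h : rs f j = j) : phiF n f j = f j := by
  rw [phiF, h]
  have h1 : j + re n f j - j = re n f j := by omega
  rw [h1]
  omega

lemma phiF_re_eq {j : ℕ} (h : re n f j = j) : phiF n f j = f j := by
  rw [phiF, h]
  have h1 : rs f j + j - j = rs f j := by omega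
  rw [h1]
  have := rs_le (f := f) j
  omega

/-- ascents are preserved by `phiF` -/
lemma ascent_iff {m : ℕ} (hm : 1 ≤ m) (hm' : m ≤ n - 1) :
    (f (m - 1) < f m ↔ phiF n f (m - 1) < phiF n f m) := by
  by_cases hasc : f (m - 1) < f m
  · have e1 : phiF n f m = f m := phiF_rs_eq (rs_eq_self hasc)
    have e2 : phiF n f (m - 1) = f (m - 1) := by
      apply phiF_re_eq
      apply re_eq_self
      right
      have : m - 1 + 1 = m := by omega
      rw [this]; exact hasc
    rw [e1, e2]
  · have hrs : rs f m ≤ m - 1 := by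
      have h1 := rs_le (f := f) m
      by_contra hc
      push_neg at hc
      have heq : rs f m = m := by omega
      have hsp := rs_spec (f := f) (j := m) (by omega)
      rw [heq] at hsp
      exact hasc hsp
    have hre : m ≤ re n f m := le_re m
    set a := rs f m
    set b := re n f m
    have hab1 : a ≤ m := rs_le m
    have e1 : phiF n f (m - 1) = f a + f b - f (a + b - (m - 1)) :=
      phiF_run hm' hrs (by omega)
    have e2 : phiF n f m = f a + f b - f (a + b - m) :=
      phiF_run hm' (by omega) (by omega)
    have hmono : f (a + b - (m - 1)) ≤ f (a + b - m) := by
      have h1 : a + b - (m - 1) = (a + b - m) + 1 := by omega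
      rw [h1]
      exact noAsc (n := n) (j := m) (by omega) (by omega)
    have hfa : f (a + b - m) ≤ f a := run_anti (n := n) (j := m) a (a + b - m) le_rfl (by omega) (by omega)
    rw [e1, e2]
    constructor
    · intro h; exact absurd h hasc
    · intro h; omega

lemma rs_phiF {j : ℕ} (hj : j ≤ n - 1) : rs (phiF n f) j = rs f j := by
  rw [rs, Nat.findGreatest_eq_iff]
  have h1 := rs_le (f := f) j
  refine ⟨h1, fun h => ?_, fun m hm hm' => ?_⟩
  · exact (ascent_iff (by omega) (by omega)).1 (rs_spec h)
  · intro hc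
    have hpf : ¬ f (m - 1) < f m := rs_max hm hm'
    exact hpf ((ascent_iff (by omega) (by omega)).2 hc)

lemma re_phiF {j : ℕ} (hj : j ≤ n - 1) : re n (phiF n f) j = re n f j := by
  have key : ∀ q, (n - 1 ≤ q ∨ phiF n f q < phiF n f (q + 1)) ↔
      (n - 1 ≤ q ∨ f q < f (q + 1)) := by
    intro q
    rcases Nat.lt_or_ge q (n - 1) with h | h
    · have := ascent_iff (n := n) (f := f) (m := q + 1) (by omega) (by omega)
      simp only [Nat.add_sub_cancel] at this
      constructor
      · rintro (h' | h')
        · omega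
        · exact Or.inr (this.2 h')
      · rintro (h' | h')
        · omega
        · exact Or.inr (this.1 h')
    · exact ⟨fun _ => Or.inl h, fun _ => Or.inl h⟩
  apply le_antisymm
  · exact re_le_of (le_re j) ((key _).mpr (re_spec (n := n) (f := f) j))
  · by_contra hlt
    push_neg at hlt
    exact re_min (n := n) (f := f) (le_re (n := n) (f := phiF n f) j) hlt
      ((key _).mp (re_spec (n := n) (f := phiF n f) j))

/-- `phiF` is an involution -/
lemma phiF_phiF {j : ℕ} (hj : j ≤ n - 1) : phiF n (phiF n f) j = f j := by
  have h1 := rs_le (f := f) j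
  have h2 := le_re (n := n) (f := f) j
  have hga : phiF n f (rs f j) = f (rs f j) := by
    have h := phiF_run (n := n) (f := f) (j := j) (p := rs f j) hj le_rfl (by omega)
    have e : rs f j + re n f j - rs f j = re n f j := by omega
    rw [e] at h
    omega
  have hgb : phiF n f (re n f j) = f (re n f j) := by
    have h := phiF_run (n := n) (f := f) (j := j) (p := re n f j) hj (by omega) le_rfl
    have e : rs f j + re n f j - re n f j = rs f j := by omega
    rw [e] at h
    omega
  have hgm : phiF n f (rs f j + re n f j - j) = f (rs f j) + f (re n f j) - f j := by
    have h := phiF_run (n := n) (f := f) (j := j) (p := rs f j + re n f j - j) hj (by omega)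
      (by omega)
    have e : rs f j + re n f j - (rs f j + re n f j - j) = j := by omega
    rw [e] at h
    exact h
  have hfj : f j ≤ f (rs f j) := run_anti (n := n) (j := j) (rs f j) j le_rfl h1 h2
  rw [phiF, rs_phiF hj, re_phiF hj, hga, hgb, hgm]
  omega

lemma phiF_le (j : ℕ) : phiF n f j ≤ f (rs f j) := by
  have h1 := rs_le (f := f) j
  have h2 := le_re (n := n) (f := f) j
  have : f (re n f j) ≤ f (rs f j + re n f j - j) :=
    run_anti (rs f j + re n f j - j) (re n f j) (by omega) (by omega) le_rfl
  rw [phiF]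
  omega

lemma phiF_last (hn : 1 ≤ n) : phiF n f (n - 1) = f (n - 1) :=
  phiF_re_eq (re_eq_self (Or.inl le_rfl))

/-- if `phiF n f` has an occurrence of 100 then `f` has an occurrence of 110 -/
lemma pattern110 {i : ℕ} (h2 : i + 2 < n)
    (hd : phiF n f (i + 1) < phiF n f i) (hl : phiF n f (i + 1) = phiF n f (i + 2)) :
    ∃ m, m + 2 < n ∧ f m = f (m + 1) ∧ f (m + 2) < f (m + 1) := by
  have hi : i ≤ n - 1 := by omega
  have hbg : i + 2 ≤ re n (phiF n f) i := by
    by_contra hc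
    push_neg at hc
    have hq1 := le_re (n := n) (f := phiF n f) i
    rcases re_spec (n := n) (f := phiF n f) i with h' | h'
    · omega
    · rcases Nat.eq_or_lt_of_le hq1 with h'' | h''
      · rw [← h''] at h'
        omega
      · have hre1 : re n (phiF n f) i = i + 1 := by omega
        rw [hre1] at h'
        have e : i + 1 + 1 = i + 2 := rfl
        rw [e] at h'
        omega
  rw [re_phiF hi] at hbg
  have h1 := rs_le (f := f) i
  have hble : re n f i ≤ n - 1 := re_le hi
  have e0 : phiF n f i = f (rs f i) + f (re n f i) - f (rs f i + re n f i - i) :=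
    phiF_run hi h1 (by omega)
  have e1 : phiF n f (i + 1) = f (rs f i) + f (re n f i) - f (rs f i + re n f i - (i + 1)) :=
    phiF_run hi (by omega) (by omega)
  have e2 : phiF n f (i + 2) = f (rs f i) + f (re n f i) - f (rs f i + re n f i - (i + 2)) :=
    phiF_run hi (by omega) (by omega)
  have m0 : f (rs f i + re n f i - i) ≤ f (rs f i) :=
    run_anti (n := n) (j := i) _ _ le_rfl (by omega) (by omega)
  have m1 : f (rs f i + re n f i - (i + 1)) ≤ f (rs f i) :=
    run_anti (n := n) (j := i) _ _ le_rfl (by omega) (by omega)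
  have m2 : f (rs f i + re n f i - (i + 2)) ≤ f (rs f i) :=
    run_anti (n := n) (j := i) _ _ le_rfl (by omega) (by omega)
  have eq1 : rs f i + re n f i - (i + 2) + 1 = rs f i + re n f i - (i + 1) := by omega
  have eq2 : rs f i + re n f i - (i + 2) + 2 = rs f i + re n f i - i := by omega
  refine ⟨rs f i + re n f i - (i + 2), by omega, ?_, ?_⟩
  · rw [eq1]
    omega
  · rw [eq1, eq2]
    omega

/-- if `phiF n f` has an occurrence of 110 then `f` has an occurrence of 100 -/
lemma pattern100 {i : ℕ} (h2 : i + 2 < n)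
    (hl : phiF n f i = phiF n f (i + 1)) (hd : phiF n f (i + 2) < phiF n f (i + 1)) :
    ∃ m, m + 2 < n ∧ f (m + 1) < f m ∧ f (m + 1) = f (m + 2) := by
  have hi : i ≤ n - 1 := by omega
  have hbg : i + 2 ≤ re n (phiF n f) i := by
    by_contra hc
    push_neg at hc
    have hq1 := le_re (n := n) (f := phiF n f) i
    rcases re_spec (n := n) (f := phiF n f) i with h' | h'
    · omega
    · rcases Nat.eq_or_lt_of_le hq1 with h'' | h''
      · rw [← h''] at h'
        omega
      · have hre1 : re n (phiF n f) i = i + 1 := by omega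
        rw [hre1] at h'
        have e : i + 1 + 1 = i + 2 := rfl
        rw [e] at h'
        omega
  rw [re_phiF hi] at hbg
  have h1 := rs_le (f := f) i
  have hble : re n f i ≤ n - 1 := re_le hi
  have e0 : phiF n f i = f (rs f i) + f (re n f i) - f (rs f i + re n f i - i) :=
    phiF_run hi h1 (by omega)
  have e1 : phiF n f (i + 1) = f (rs f i) + f (re n f i) - f (rs f i + re n f i - (i + 1)) :=
    phiF_run hi (by omega) (by omega)
  have e2 : phiF n f (i + 2) = f (rs f i) + f (re n f i) - f (rs f i + re n f i - (i + 2)) :=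
    phiF_run hi (by omega) (by omega)
  have m0 : f (rs f i + re n f i - i) ≤ f (rs f i) :=
    run_anti (n := n) (j := i) _ _ le_rfl (by omega) (by omega)
  have m1 : f (rs f i + re n f i - (i + 1)) ≤ f (rs f i) :=
    run_anti (n := n) (j := i) _ _ le_rfl (by omega) (by omega)
  have m2 : f (rs f i + re n f i - (i + 2)) ≤ f (rs f i) :=
    run_anti (n := n) (j := i) _ _ le_rfl (by omega) (by omega)
  have eq1 : rs f i + re n f i - (i + 2) + 1 = rs f i + re n f i - (i + 1) := by omega
  have eq2 : rs f i + re n f i - (i + 2) + 2 = rs f i + re n f i - i := by omega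
  refine ⟨rs f i + re n f i - (i + 2), by omega, ?_, ?_⟩
  · rw [eq1]
    omega
  · rw [eq1, eq2]
    omega

/-! ### The bijection on inversion sequences -/

/-- congruence: `rs` only depends on values up to `j` -/
lemma rs_congr_fun {f g : ℕ → ℕ} {j : ℕ} (h : ∀ m, m ≤ j → f m = g m) :
    rs f j = rs g j := by
  rw [rs, Nat.findGreatest_eq_iff]
  have h1 : rs g j ≤ j := rs_le j
  refine ⟨h1, fun hne => ?_, fun m hm hm' => ?_⟩
  · rw [h _ (by omega), h _ (by omega)]
    exact rs_spec hne
  · rw [h _ (by omega), h _ (by omega)]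
    exact rs_max hm hm'

lemma re_congr_fun {f g : ℕ → ℕ} {j : ℕ} (h : ∀ m, m < n → f m = g m) :
    re n f j = re n g j := by
  have key : ∀ q, (n - 1 ≤ q ∨ f q < f (q + 1)) ↔ (n - 1 ≤ q ∨ g q < g (q + 1)) := by
    intro q
    rcases Nat.lt_or_ge q (n - 1) with hq | hq
    · rw [h _ (by omega), h _ (by omega)]
    · exact ⟨fun _ => Or.inl hq, fun _ => Or.inl hq⟩
  apply le_antisymm
  · exact re_le_of (le_re j) ((key _).mpr (re_spec (n := n) (f := g) j))
  · by_contra hlt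
    push_neg at hlt
    exact re_min (n := n) (f := g) (le_re (n := n) (f := f) j) hlt
      ((key _).mp (re_spec (n := n) (f := f) j))

lemma phiF_congr_fun {f g : ℕ → ℕ} {j : ℕ} (hj : j ≤ n - 1) (hn : 1 ≤ n)
    (h : ∀ m, m < n → f m = g m) : phiF n f j = phiF n g j := by
  have e1 : rs f j = rs g j := rs_congr_fun (fun m hm => h m (by omega))
  have e2 : re n f j = re n g j := re_congr_fun h
  have h1 : rs g j ≤ j := rs_le j
  have h2 : j ≤ re n g j := le_re j
  have h3 : re n g j ≤ n - 1 := re_le hj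
  rw [phiF, phiF, e1, e2, h _ (by omega), h _ (by omega), h _ (by omega)]

def phi {n : ℕ} (e : Fin n → Fin n) : Fin n → Fin n :=
  fun j => ⟨min (phiF n (extSeq e) j) j, lt_of_le_of_lt (min_le_right _ _) j.isLt⟩

lemma isInvSeq_phi {n : ℕ} (e : Fin n → Fin n) : IsInvSeq (phi e) :=
  fun i => min_le_right _ _

lemma extSeq_lt {n : ℕ} (e : Fin n → Fin n) {j : ℕ} (hj : j < n) :
    extSeq e j = (e ⟨j, hj⟩ : ℕ) := by
  rw [extSeq]
  simp [hj]

lemma extSeq_le {n : ℕ} {e : Fin n → Fin n} (he : IsInvSeq e) (j : ℕ) :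
    extSeq e j ≤ j := by
  rw [extSeq]
  split
  · exact he _
  · exact Nat.zero_le _

lemma extSeq_phi {n : ℕ} {e : Fin n → Fin n} (he : IsInvSeq e) {j : ℕ} (hj : j < n) :
    extSeq (phi e) j = phiF n (extSeq e) j := by
  rw [extSeq_lt (phi e) hj]
  show (min (phiF n (extSeq e) j) j : ℕ) = _
  have h1 : phiF n (extSeq e) j ≤ j := by
    have := phiF_le (n := n) (f := extSeq e) j
    have h2 := extSeq_le he (rs (extSeq e) j)
    have h3 := rs_le (f := extSeq e) j
    omega
  omega

lemma phi_phi {n : ℕ} {e : Fin n → Fin n} (he : IsInvSeq e) : phi (phi e) = e := by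
  funext j
  apply Fin.ext
  have hj : (j : ℕ) < n := j.isLt
  have hn : 1 ≤ n := by omega
  have key : extSeq (phi (phi e)) j = extSeq e (j : ℕ) := by
    rw [extSeq_phi (isInvSeq_phi e) hj]
    have e1 : phiF n (extSeq (phi e)) (j : ℕ) = phiF n (phiF n (extSeq e)) (j : ℕ) := by
      apply phiF_congr_fun (by omega) hn
      intro m hm
      exact extSeq_phi he hm
    rw [e1, phiF_phiF (by omega)]
  rw [extSeq_lt _ hj, extSeq_lt _ hj] at key
  simpa using key

lemma avoid100_phi {n : ℕ} {e : Fin n → Fin n} (he : IsInvSeq e) (h : ¬ Contains110 e) :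
    ¬ Contains100 (phi e) := by
  rintro ⟨i, hi, hd, hl⟩
  simp only [show extSeq (phi e) i = phiF n (extSeq e) i from extSeq_phi he (by omega),
    show extSeq (phi e) (i + 1) = phiF n (extSeq e) (i + 1) from extSeq_phi he (by omega),
    show extSeq (phi e) (i + 2) = phiF n (extSeq e) (i + 2) from extSeq_phi he (by omega)]
    at hd hl
  obtain ⟨m, hm, h1, h2⟩ := pattern110 hi hd hl
  exact h ⟨m, hm, h1, h2⟩

lemma avoid110_phi {n : ℕ} {e : Fin n → Fin n} (he : IsInvSeq e) (h : ¬ Contains100 e) :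
    ¬ Contains110 (phi e) := by
  rintro ⟨i, hi, hl, hd⟩
  simp only [show extSeq (phi e) i = phiF n (extSeq e) i from extSeq_phi he (by omega),
    show extSeq (phi e) (i + 1) = phiF n (extSeq e) (i + 1) from extSeq_phi he (by omega),
    show extSeq (phi e) (i + 2) = phiF n (extSeq e) (i + 2) from extSeq_phi he (by omega)]
    at hd hl
  obtain ⟨m, hm, h1, h2⟩ := pattern100 hi hl hd
  exact h ⟨m, hm, h1, h2⟩

lemma last_phi {n : ℕ} {e : Fin n → Fin n} (he : IsInvSeq e) (hn : 1 ≤ n) :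
    extSeq (phi e) (n - 1) = extSeq e (n - 1) := by
  rw [extSeq_phi he (by omega), phiF_last hn]

end Stmt5Aux

open Stmt5Aux in
theorem stmt5 :
    (∀ n : ℕ, 1 ≤ n → ∀ k : ℕ, k < n →
      Nat.card {e : Fin n → Fin n // IsInvSeq e ∧ ¬ Contains110 e ∧ extSeq e (n - 1) = k} =
      Nat.card {e : Fin n → Fin n // IsInvSeq e ∧ ¬ Contains100 e ∧ extSeq e (n - 1) = k}) ∧
    (∀ n : ℕ,
      Nat.card {e : Fin n → Fin n // IsInvSeq e ∧ ¬ Contains110 e} =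
      Nat.card {e : Fin n → Fin n // IsInvSeq e ∧ ¬ Contains100 e}) := by
  constructor
  · intro n hn k hk
    apply Nat.card_congr
    exact
      { toFun := fun x => ⟨phi x.1, isInvSeq_phi _, avoid100_phi x.2.1 x.2.2.1,
          by rw [last_phi x.2.1 hn]; exact x.2.2.2⟩
        invFun := fun x => ⟨phi x.1, isInvSeq_phi _, avoid110_phi x.2.1 x.2.2.1,
          by rw [last_phi x.2.1 hn]; exact x.2.2.2⟩
        left_inv := fun x => Subtype.ext (phi_phi x.2.1)
        right_inv := fun x => Subtype.ext (phi_phi x.2.1) }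
  · intro n
    apply Nat.card_congr
    exact
      { toFun := fun x => ⟨phi x.1, isInvSeq_phi _, avoid100_phi x.2.1 x.2.2⟩
        invFun := fun x => ⟨phi x.1, isInvSeq_phi _, avoid110_phi x.2.1 x.2.2⟩
        left_inv := fun x => Subtype.ext (phi_phi x.2.1)
        right_inv := fun x => Subtype.ext (phi_phi x.2.1) }
end

section
/- For every positive integer n and every subset S of {1,...,n}, the number of inversion sequences e of length n such that every i ∈ S is the starting position of an occurrence of 110 in e equals the number of inversion sequences e of length n such that every i ∈ S is the starting position of an occurrence of 100 in e. -/
/-- `e` has an occurrence of 110 in (0-indexed) position `i`: `e_i = e_{i+1} > e_{i+2}`. -/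
def Occ110At {n : ℕ} (e : Fin n → Fin n) (i : ℕ) : Prop :=
  i + 2 < n ∧ extSeq e i = extSeq e (i + 1) ∧ extSeq e (i + 2) < extSeq e (i + 1)

/-- `e` has an occurrence of 100 in (0-indexed) position `i`: `e_i > e_{i+1} = e_{i+2}`. -/
def Occ100At {n : ℕ} (e : Fin n → Fin n) (i : ℕ) : Prop :=
  i + 2 < n ∧ extSeq e (i + 1) < extSeq e i ∧ extSeq e (i + 1) = extSeq e (i + 2)

namespace Stmt6Aux

variable {n : ℕ}

lemma ext_lt (e : Fin n → Fin n) {k : ℕ} (h : k < n) : extSeq e k = (e ⟨k, h⟩ : ℕ) :=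
  dif_pos h

/-- shift: at positions j = i+1 with i ∈ S, take the old value at j+1. -/
def phi (S : Finset ℕ) (e : Fin n → Fin n) : Fin n → Fin n := fun j =>
  if ((j : ℕ) - 1 ∈ S ∧ 1 ≤ (j : ℕ)) then
    (if h : (j : ℕ) + 1 < n then e ⟨(j : ℕ) + 1, h⟩ else e j)
  else e j

/-- inverse shift: at positions j = i+1 with i ∈ S, take the old value at i. -/
def psi (S : Finset ℕ) (e : Fin n → Fin n) : Fin n → Fin n := fun j =>
  if ((j : ℕ) - 1 ∈ S ∧ 1 ≤ (j : ℕ)) then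
    e ⟨(j : ℕ) - 1, Nat.lt_of_le_of_lt (Nat.sub_le _ _) j.isLt⟩
  else e j

lemma phi_apply_of_mem {S : Finset ℕ} {e : Fin n → Fin n} {i : ℕ} (hi : i ∈ S)
    (h2 : i + 2 < n) (j : Fin n) (hj : (j : ℕ) = i + 1) : phi S e j = e ⟨i + 2, h2⟩ := by
  unfold phi
  have hc : ((j : ℕ) - 1 ∈ S ∧ 1 ≤ (j : ℕ)) := by
    constructor
    · have : (j : ℕ) - 1 = i := by omega
      rwa [this]
    · omega
  rw [if_pos hc]
  have h1 : (j : ℕ) + 1 < n := by omega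
  rw [dif_pos h1]
  congr 1
  ext
  simp only []
  omega

lemma phi_apply_of_not {S : Finset ℕ} {e : Fin n → Fin n} (j : Fin n)
    (hj : ¬((j : ℕ) - 1 ∈ S ∧ 1 ≤ (j : ℕ))) : phi S e j = e j := if_neg hj

lemma psi_apply_of_mem {S : Finset ℕ} {e : Fin n → Fin n} {i : ℕ} (hi : i ∈ S)
    (hin : i < n) (j : Fin n) (hj : (j : ℕ) = i + 1) : psi S e j = e ⟨i, hin⟩ := by
  unfold psi
  have hc : ((j : ℕ) - 1 ∈ S ∧ 1 ≤ (j : ℕ)) := by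
    constructor
    · have : (j : ℕ) - 1 = i := by omega
      rwa [this]
    · omega
  rw [if_pos hc]
  congr 1
  ext
  simp only []
  omega

lemma psi_apply_of_not {S : Finset ℕ} {e : Fin n → Fin n} (j : Fin n)
    (hj : ¬((j : ℕ) - 1 ∈ S ∧ 1 ≤ (j : ℕ))) : psi S e j = e j := if_neg hj

lemma noadj110 {S : Finset ℕ} {e : Fin n → Fin n} (h : ∀ i ∈ S, Occ110At e i)
    {i : ℕ} (hi : i ∈ S) (hi' : i + 1 ∈ S) : False := by
  obtain ⟨-, h1, h2⟩ := h i hi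
  obtain ⟨-, h3, h4⟩ := h (i + 1) hi'
  have e1 : i + 1 + 1 = i + 2 := by omega
  rw [e1] at h3
  omega

lemma noadj100 {S : Finset ℕ} {e : Fin n → Fin n} (h : ∀ i ∈ S, Occ100At e i)
    {i : ℕ} (hi : i ∈ S) (hi' : i + 1 ∈ S) : False := by
  obtain ⟨-, h1, h2⟩ := h i hi
  obtain ⟨-, h3, h4⟩ := h (i + 1) hi'
  have e1 : i + 1 + 1 = i + 2 := by omega
  rw [e1] at h3
  omega

lemma not_cond_of_mem110 {S : Finset ℕ} {e : Fin n → Fin n} (h : ∀ i ∈ S, Occ110At e i)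
    {i : ℕ} (hi : i ∈ S) : ¬(i - 1 ∈ S ∧ 1 ≤ i) := by
  rintro ⟨hm, h1⟩
  have : i - 1 + 1 = i := by omega
  exact noadj110 h hm (by rwa [this])

lemma not_cond_of_mem100 {S : Finset ℕ} {e : Fin n → Fin n} (h : ∀ i ∈ S, Occ100At e i)
    {i : ℕ} (hi : i ∈ S) : ¬(i - 1 ∈ S ∧ 1 ≤ i) := by
  rintro ⟨hm, h1⟩
  have : i - 1 + 1 = i := by omega
  exact noadj100 h hm (by rwa [this])

lemma phi_mem {S : Finset ℕ} {e : Fin n → Fin n} (hinv : IsInvSeq e)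
    (h : ∀ i ∈ S, Occ110At e i) :
    IsInvSeq (phi S e) ∧ ∀ i ∈ S, Occ100At (phi S e) i := by
  constructor
  · intro j
    by_cases hc : ((j : ℕ) - 1 ∈ S ∧ 1 ≤ (j : ℕ))
    · obtain ⟨hm, h1⟩ := hc
      set i := (j : ℕ) - 1 with hidef
      have hj : (j : ℕ) = i + 1 := by omega
      obtain ⟨h2, heq, hlt⟩ := h i hm
      rw [phi_apply_of_mem hm h2 j hj]
      have hi1 : i + 1 < n := by omega
      rw [ext_lt e h2, ext_lt e hi1] at hlt
      have := hinv ⟨i + 1, hi1⟩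
      simp only [] at this hlt ⊢
      omega
    · rw [phi_apply_of_not j hc]
      exact hinv j
  · intro i hi
    obtain ⟨h2, heq, hlt⟩ := h i hi
    have hi0 : i < n := by omega
    have hi1 : i + 1 < n := by omega
    rw [ext_lt e hi0, ext_lt e hi1] at heq
    rw [ext_lt e h2, ext_lt e hi1] at hlt
    have v0 : extSeq (phi S e) i = (e ⟨i, hi0⟩ : ℕ) := by
      rw [ext_lt _ hi0, phi_apply_of_not ⟨i, hi0⟩ (not_cond_of_mem110 h hi)]
    have v1 : extSeq (phi S e) (i + 1) = (e ⟨i + 2, h2⟩ : ℕ) := by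
      rw [ext_lt _ hi1, phi_apply_of_mem hi h2 ⟨i + 1, hi1⟩ rfl]
    have v2 : extSeq (phi S e) (i + 2) = (e ⟨i + 2, h2⟩ : ℕ) := by
      rw [ext_lt _ h2, phi_apply_of_not ⟨i + 2, h2⟩ ?_]
      rintro ⟨hm, -⟩
      have : (i + 2 : ℕ) - 1 = i + 1 := by omega
      rw [this] at hm
      exact noadj110 h hi hm
    exact ⟨h2, by rw [v0, v1]; omega, by rw [v1, v2]⟩

lemma psi_mem {S : Finset ℕ} {e : Fin n → Fin n} (hinv : IsInvSeq e)
    (h : ∀ i ∈ S, Occ100At e i) :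
    IsInvSeq (psi S e) ∧ ∀ i ∈ S, Occ110At (psi S e) i := by
  constructor
  · intro j
    by_cases hc : ((j : ℕ) - 1 ∈ S ∧ 1 ≤ (j : ℕ))
    · obtain ⟨hm, h1⟩ := hc
      have hj : (j : ℕ) = ((j : ℕ) - 1) + 1 := by omega
      have hin : (j : ℕ) - 1 < n := by omega
      rw [psi_apply_of_mem hm hin j hj]
      have := hinv ⟨(j : ℕ) - 1, hin⟩
      simp only [] at this ⊢
      omega
    · rw [psi_apply_of_not j hc]
      exact hinv j
  · intro i hi
    obtain ⟨h2, hlt, heq⟩ := h i hi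
    have hi0 : i < n := by omega
    have hi1 : i + 1 < n := by omega
    rw [ext_lt e hi0, ext_lt e hi1] at hlt
    rw [ext_lt e h2, ext_lt e hi1] at heq
    have v0 : extSeq (psi S e) i = (e ⟨i, hi0⟩ : ℕ) := by
      rw [ext_lt _ hi0, psi_apply_of_not ⟨i, hi0⟩ (not_cond_of_mem100 h hi)]
    have v1 : extSeq (psi S e) (i + 1) = (e ⟨i, hi0⟩ : ℕ) := by
      rw [ext_lt _ hi1, psi_apply_of_mem hi hi0 ⟨i + 1, hi1⟩ rfl]
    have v2 : extSeq (psi S e) (i + 2) = (e ⟨i + 2, h2⟩ : ℕ) := by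
      rw [ext_lt _ h2, psi_apply_of_not ⟨i + 2, h2⟩ ?_]
      rintro ⟨hm, -⟩
      have : (i + 2 : ℕ) - 1 = i + 1 := by omega
      rw [this] at hm
      exact noadj100 h hi hm
    exact ⟨h2, by rw [v0, v1], by rw [v1, v2]; omega⟩

lemma psi_phi {S : Finset ℕ} {e : Fin n → Fin n} (h : ∀ i ∈ S, Occ110At e i) :
    psi S (phi S e) = e := by
  funext j
  by_cases hc : ((j : ℕ) - 1 ∈ S ∧ 1 ≤ (j : ℕ))
  · obtain ⟨hm, h1⟩ := hc
    set i := (j : ℕ) - 1 with hidef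
    have hj : (j : ℕ) = i + 1 := by omega
    obtain ⟨h2, heq, hlt⟩ := h i hm
    have hi0 : i < n := by omega
    have hi1 : i + 1 < n := by omega
    rw [psi_apply_of_mem hm hi0 j hj,
      phi_apply_of_not ⟨i, hi0⟩ (not_cond_of_mem110 h hm)]
    rw [ext_lt e hi0, ext_lt e hi1] at heq
    have hjeq : j = ⟨i + 1, hi1⟩ := by ext; exact hj
    rw [hjeq]
    exact Fin.ext heq
  · rw [psi_apply_of_not j hc, phi_apply_of_not j hc]

lemma phi_psi {S : Finset ℕ} {e : Fin n → Fin n} (h : ∀ i ∈ S, Occ100At e i) :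
    phi S (psi S e) = e := by
  funext j
  by_cases hc : ((j : ℕ) - 1 ∈ S ∧ 1 ≤ (j : ℕ))
  · obtain ⟨hm, h1⟩ := hc
    set i := (j : ℕ) - 1 with hidef
    have hj : (j : ℕ) = i + 1 := by omega
    obtain ⟨h2, hlt, heq⟩ := h i hm
    have hi1 : i + 1 < n := by omega
    rw [phi_apply_of_mem hm h2 j hj]
    have hnc : ¬(((⟨i + 2, h2⟩ : Fin n) : ℕ) - 1 ∈ S ∧ 1 ≤ ((⟨i + 2, h2⟩ : Fin n) : ℕ)) := by
      rintro ⟨hm', -⟩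
      have : (i + 2 : ℕ) - 1 = i + 1 := by omega
      rw [this] at hm'
      exact noadj100 h hm hm'
    rw [psi_apply_of_not ⟨i + 2, h2⟩ hnc]
    rw [ext_lt e h2, ext_lt e hi1] at heq
    have hjeq : j = ⟨i + 1, hi1⟩ := by ext; exact hj
    rw [hjeq]
    exact Fin.ext heq.symm
  · rw [phi_apply_of_not j hc, psi_apply_of_not j hc]

end Stmt6Aux

theorem stmt6 (n : ℕ) (hn : 1 ≤ n) (S : Finset ℕ) (hS : ∀ i ∈ S, i < n) :
    Nat.card {e : Fin n → Fin n // IsInvSeq e ∧ ∀ i ∈ S, Occ110At e i} =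
    Nat.card {e : Fin n → Fin n // IsInvSeq e ∧ ∀ i ∈ S, Occ100At e i} := by
  apply Nat.card_congr
  exact {
    toFun := fun x => ⟨Stmt6Aux.phi S x.1, Stmt6Aux.phi_mem x.2.1 x.2.2⟩
    invFun := fun x => ⟨Stmt6Aux.psi S x.1, Stmt6Aux.psi_mem x.2.1 x.2.2⟩
    left_inv := fun x => Subtype.ext (Stmt6Aux.psi_phi x.2.2)
    right_inv := fun x => Subtype.ext (Stmt6Aux.phi_psi x.2.2) }
end

section
/- The consecutive patterns 110 and 100 are super-strongly Wilf equivalent: for all n and all subsets T of {1,...,n}, the number of inversion sequences of length n whose set of starting positions of occurrences of 110 equals T is the same as the number whose set of starting positions of occurrences of 100 equals T. -/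
/-!
Replacing the middle entry of an occurrence `a a b` of 110 by its right neighbour gives an
occurrence `a b b` of 100, and replacing the middle entry of `a b b` by its left neighbour
undoes this. Occurrences of either pattern never start at adjacent positions, so doing this at
every position of `T` at once is a bijection between the inversion sequences with 110 at (at
least) the positions of `T` and those with 100 there; the new middle entry `e_{j+2} < e_{j+1}`
keeps the sequence an inversion sequence. So for every `T` as many sequences have a 110-occurrence
set containing `T` as have a 100-occurrence set containing `T`, and Möbius inversion on the
subset lattice gives the same for the occurrence sets equal to `T`.
-/

open Finset

section SupersetInversion

variable {α β : Type*} [DecidableEq α]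

theorem card_filter_subset_eq_add (s : Finset β) (φ : β → Finset α) (T : Finset α) :
    #{x ∈ s | T ⊆ φ x} = #{x ∈ s | φ x = T} + #{x ∈ s | T ⊂ φ x} := by
  classical
  rw [← card_union_of_disjoint (disjoint_filter.2 fun x _ h => h ▸ ssubset_irrefl T), ← filter_or]
  congr 1
  refine filter_congr fun x _ => ?_
  rw [subset_iff_ssubset_or_eq, eq_comm, or_comm]

theorem card_filter_ssubset_eq_sum (s : Finset β) (φ : β → Finset α) {V : Finset (Finset α)}
    (hV : ∀ x ∈ s, φ x ∈ V) (T : Finset α) :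
    #{x ∈ s | T ⊂ φ x} = ∑ S ∈ V with T ⊂ S, #{x ∈ s | φ x = S} := by
  rw [card_eq_sum_card_fiberwise (f := φ) (t := {S ∈ V | T ⊂ S}) fun x hx => ?_]
  · refine sum_congr rfl fun S hS => ?_
    rw [filter_filter]
    refine congrArg card (filter_congr fun x _ => ?_)
    exact ⟨And.right, fun h => ⟨h ▸ (mem_filter.1 hS).2, h⟩⟩
  · rw [coe_filter] at hx
    exact mem_filter.2 ⟨hV x hx.1, hx.2⟩

/-- Möbius inversion on the subset lattice, for counting functions. -/
theorem card_filter_eq_eq_of_card_filter_subset_eq (s : Finset β) (φ ψ : β → Finset α)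
    (h : ∀ T, #{x ∈ s | T ⊆ φ x} = #{x ∈ s | T ⊆ ψ x}) (T : Finset α) :
    #{x ∈ s | φ x = T} = #{x ∈ s | ψ x = T} := by
  set V := s.image φ ∪ s.image ψ
  obtain ⟨k, hk⟩ : ∃ k, #{S ∈ V | T ⊂ S} = k := ⟨_, rfl⟩
  induction k using Nat.strong_induction_on generalizing T with
  | _ k ih =>
  have hsum : ∑ S ∈ V with T ⊂ S, #{x ∈ s | φ x = S} =
      ∑ S ∈ V with T ⊂ S, #{x ∈ s | ψ x = S} := by
    refine sum_congr rfl fun S hS => ih _ ?_ S rfl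
    obtain ⟨-, hTS⟩ := mem_filter.1 hS
    rw [← hk]
    refine card_lt_card ((ssubset_iff_of_subset ?_).2 ⟨S, hS, by simp⟩)
    exact monotone_filter_right _ fun S' _ h => hTS.trans h
  have hT := h T
  rw [card_filter_subset_eq_add, card_filter_subset_eq_add,
    card_filter_ssubset_eq_sum s φ (V := V) (fun x hx => mem_union_left _ (mem_image_of_mem φ hx)),
    card_filter_ssubset_eq_sum s ψ (V := V) (fun x hx => mem_union_right _ (mem_image_of_mem ψ hx)),
    hsum] at hT
  omega

end SupersetInversion

section InversionSequences

variable {n : ℕ}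

theorem extSeq_lt_s7 (e : Fin n → Fin n) (hn : 0 < n) (k : ℕ) : extSeq e k < n := by
  unfold extSeq
  split_ifs
  exacts [(e _).isLt, hn]

theorem IsInvSeq.extSeq_le {e : Fin n → Fin n} (he : IsInvSeq e) (k : ℕ) : extSeq e k ≤ k := by
  unfold extSeq
  split_ifs with hk
  exacts [he ⟨k, hk⟩, Nat.zero_le k]

theorem extSeq_val (e : Fin n → Fin n) (p : Fin n) : extSeq e p = e p := dif_pos p.isLt

/-- `p ↦ e_{σ p}`, where indices `σ p ≥ n` read as `0`. -/
def reindexSeq (σ : ℕ → ℕ) (e : Fin n → Fin n) : Fin n → Fin n :=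
  fun p => ⟨extSeq e (σ p), extSeq_lt_s7 e p.pos _⟩

theorem extSeq_reindexSeq (σ : ℕ → ℕ) (e : Fin n → Fin n) {p : ℕ} (hp : p < n) :
    extSeq (reindexSeq σ e) p = extSeq e (σ p) :=
  dif_pos hp

theorem reindexSeq_reindexSeq {σ τ : ℕ → ℕ} (hτ : ∀ p < n, τ p < n) (e : Fin n → Fin n) :
    reindexSeq τ (reindexSeq σ e) = reindexSeq (σ ∘ τ) e :=
  funext fun p => Fin.ext (extSeq_reindexSeq σ e (hτ p p.isLt))

theorem reindexSeq_eq_self {σ : ℕ → ℕ} {e : Fin n → Fin n}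
    (h : ∀ p < n, extSeq e (σ p) = extSeq e p) : reindexSeq σ e = e :=
  funext fun p => Fin.ext ((h p p.isLt).trans (extSeq_val e p))

theorem isInvSeq_reindexSeq {σ : ℕ → ℕ} {e : Fin n → Fin n}
    (h : ∀ p < n, extSeq e (σ p) ≤ p) : IsInvSeq (reindexSeq σ e) :=
  fun p => h p p.isLt

theorem Occ110At.not_occ110At_add_one {e : Fin n → Fin n} {j : ℕ} (h : Occ110At e j) :
    ¬ Occ110At e (j + 1) := by
  rintro ⟨-, h', -⟩
  exact h.2.2.ne' h'

theorem Occ100At.not_occ100At_add_one {e : Fin n → Fin n} {j : ℕ} (h : Occ100At e j) :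
    ¬ Occ100At e (j + 1) := by
  rintro ⟨-, h', -⟩
  exact h'.ne h.2.2.symm

theorem notMem_image_add_one {T : Finset ℕ} (hT : ∀ j ∈ T, j + 1 ∉ T) {j : ℕ} (hj : j ∈ T) :
    j ∉ T.image (· + 1) := by
  intro h
  obtain ⟨i, hi, rfl⟩ := mem_image.1 h
  exact hT i hi hj

theorem add_two_notMem_image_add_one {T : Finset ℕ} (hT : ∀ j ∈ T, j + 1 ∉ T) {j : ℕ}
    (hj : j ∈ T) : j + 2 ∉ T.image (· + 1) := by
  simpa using hT j hj

/-- Overwrite the middle entry `e_{j+1}` of each window `j ∈ T` with its right neighbour. -/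
def midFromRight (T : Finset ℕ) : (Fin n → Fin n) → Fin n → Fin n :=
  reindexSeq fun p => if p ∈ T.image (· + 1) then p + 1 else p

/-- Overwrite the middle entry `e_{j+1}` of each window `j ∈ T` with its left neighbour. -/
def midFromLeft (T : Finset ℕ) : (Fin n → Fin n) → Fin n → Fin n :=
  reindexSeq fun p => if p ∈ T.image (· + 1) then p - 1 else p

section Windows

variable {T : Finset ℕ} {e f : Fin n → Fin n}

theorem extSeq_midFromRight {p : ℕ} (hp : p < n) :
    extSeq (midFromRight T e) p = extSeq e (if p ∈ T.image (· + 1) then p + 1 else p) :=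
  extSeq_reindexSeq _ e hp

theorem extSeq_midFromLeft {p : ℕ} (hp : p < n) :
    extSeq (midFromLeft T f) p = extSeq f (if p ∈ T.image (· + 1) then p - 1 else p) :=
  extSeq_reindexSeq _ f hp

theorem occ100At_midFromRight (hocc : ∀ j ∈ T, Occ110At e j) {j : ℕ} (hj : j ∈ T) :
    Occ100At (midFromRight T e) j := by
  have hT : ∀ i ∈ T, i + 1 ∉ T := fun i hi => (hocc i hi).not_occ110At_add_one ∘ hocc (i + 1)
  obtain ⟨hjn, heq, hlt⟩ := hocc j hj
  refine ⟨hjn, ?_, ?_⟩ <;>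
    rw [extSeq_midFromRight (p := j + 1) (by omega), if_pos (mem_image_of_mem _ hj)]
  · rw [extSeq_midFromRight (by omega), if_neg (notMem_image_add_one hT hj), heq]
    exact hlt
  · rw [extSeq_midFromRight (by omega), if_neg (add_two_notMem_image_add_one hT hj)]

theorem occ110At_midFromLeft (hocc : ∀ j ∈ T, Occ100At f j) {j : ℕ} (hj : j ∈ T) :
    Occ110At (midFromLeft T f) j := by
  have hT : ∀ i ∈ T, i + 1 ∉ T := fun i hi => (hocc i hi).not_occ100At_add_one ∘ hocc (i + 1)
  obtain ⟨hjn, hlt, heq⟩ := hocc j hj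
  refine ⟨hjn, ?_, ?_⟩ <;>
    rw [extSeq_midFromLeft (p := j + 1) (by omega), if_pos (mem_image_of_mem _ hj),
      Nat.add_sub_cancel]
  · rw [extSeq_midFromLeft (by omega), if_neg (notMem_image_add_one hT hj)]
  · rw [extSeq_midFromLeft (by omega), if_neg (add_two_notMem_image_add_one hT hj)]
    omega

theorem IsInvSeq.midFromRight (he : IsInvSeq e) (hocc : ∀ j ∈ T, Occ110At e j) :
    IsInvSeq (midFromRight T e) := by
  refine isInvSeq_reindexSeq fun p _ => ?_
  split_ifs with hp
  · obtain ⟨j, hj, rfl⟩ := mem_image.1 hp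
    exact (hocc j hj).2.2.le.trans (he.extSeq_le (j + 1))
  · exact he.extSeq_le p

theorem IsInvSeq.midFromLeft (hf : IsInvSeq f) : IsInvSeq (midFromLeft T f) :=
  isInvSeq_reindexSeq fun p _ => (hf.extSeq_le _).trans (by split_ifs <;> omega)

theorem midFromLeft_midFromRight (hocc : ∀ j ∈ T, Occ110At e j) :
    midFromLeft T (midFromRight T e) = e := by
  have hT : ∀ i ∈ T, i + 1 ∉ T := fun i hi => (hocc i hi).not_occ110At_add_one ∘ hocc (i + 1)
  rw [midFromLeft, midFromRight, reindexSeq_reindexSeq fun p hp => by split_ifs <;> omega]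
  refine reindexSeq_eq_self fun p _ => ?_
  by_cases hp : p ∈ T.image (· + 1)
  · obtain ⟨j, hj, rfl⟩ := mem_image.1 hp
    rw [Function.comp_apply, if_pos hp, Nat.add_sub_cancel, if_neg (notMem_image_add_one hT hj)]
    exact (hocc j hj).2.1
  · rw [Function.comp_apply, if_neg hp, if_neg hp]

theorem midFromRight_midFromLeft (hocc : ∀ j ∈ T, Occ100At f j) :
    midFromRight T (midFromLeft T f) = f := by
  have hT : ∀ i ∈ T, i + 1 ∉ T := fun i hi => (hocc i hi).not_occ100At_add_one ∘ hocc (i + 1)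
  have hbound : ∀ p < n, (if p ∈ T.image (· + 1) then p + 1 else p) < n := fun p hp => by
    split_ifs with h
    · obtain ⟨j, hj, rfl⟩ := mem_image.1 h
      exact (hocc j hj).1
    · exact hp
  rw [midFromLeft, midFromRight, reindexSeq_reindexSeq hbound]
  refine reindexSeq_eq_self fun p _ => ?_
  by_cases hp : p ∈ T.image (· + 1)
  · obtain ⟨j, hj, rfl⟩ := mem_image.1 hp
    rw [Function.comp_apply, if_pos hp, if_neg (add_two_notMem_image_add_one hT hj)]
    exact (hocc j hj).2.2.symm
  · rw [Function.comp_apply, if_neg hp, if_neg hp]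

end Windows

theorem natCard_occ110_superset_eq (T : Finset ℕ) :
    Nat.card {e : Fin n → Fin n // IsInvSeq e ∧ ∀ j ∈ T, Occ110At e j} =
    Nat.card {f : Fin n → Fin n // IsInvSeq f ∧ ∀ j ∈ T, Occ100At f j} :=
  Nat.card_congr
    { toFun e := ⟨midFromRight T e, e.2.1.midFromRight e.2.2,
        fun _ hj => occ100At_midFromRight e.2.2 hj⟩
      invFun f := ⟨midFromLeft T f, f.2.1.midFromLeft, fun _ hj => occ110At_midFromLeft f.2.2 hj⟩
      left_inv e := Subtype.ext (midFromLeft_midFromRight e.2.2)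
      right_inv f := Subtype.ext (midFromRight_midFromLeft f.2.2) }

variable {P : (Fin n → Fin n) → ℕ → Prop}

open scoped Classical in
theorem natCard_eq_card_filter_eq (hP : ∀ e i, P e i → i < n) (T : Finset ℕ) :
    Nat.card {e : Fin n → Fin n // IsInvSeq e ∧ ∀ i, P e i ↔ i ∈ T} =
      #{e ∈ {e | IsInvSeq e} | {i ∈ range n | P e i} = T} := by
  rw [Nat.card_eq_fintype_card, Fintype.card_subtype, filter_filter]
  refine congrArg card (filter_congr fun e _ => and_congr_right fun _ => ?_)
  rw [Finset.ext_iff]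
  refine forall_congr' fun i => ?_
  rw [mem_filter, mem_range, and_iff_right_of_imp (hP e i)]

open scoped Classical in
theorem natCard_eq_card_filter_subset (hP : ∀ e i, P e i → i < n) (T : Finset ℕ) :
    Nat.card {e : Fin n → Fin n // IsInvSeq e ∧ ∀ i ∈ T, P e i} =
      #{e ∈ {e | IsInvSeq e} | T ⊆ {i ∈ range n | P e i}} := by
  rw [Nat.card_eq_fintype_card, Fintype.card_subtype, filter_filter]
  refine congrArg card (filter_congr fun e _ => and_congr_right fun _ => ?_)
  refine forall₂_congr fun i _ => ?_
  rw [mem_filter, mem_range, and_iff_right_of_imp (hP e i)]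

end InversionSequences

theorem stmt7_general (n : ℕ) (T : Finset ℕ) :
    Nat.card {e : Fin n → Fin n // IsInvSeq e ∧ ∀ i : ℕ, Occ110At e i ↔ i ∈ T} =
    Nat.card {e : Fin n → Fin n // IsInvSeq e ∧ ∀ i : ℕ, Occ100At e i ↔ i ∈ T} := by
  classical
  have h110 : ∀ (e : Fin n → Fin n) i, Occ110At e i → i < n := fun _ _ h => by have := h.1; omega
  have h100 : ∀ (e : Fin n → Fin n) i, Occ100At e i → i < n := fun _ _ h => by have := h.1; omega
  rw [natCard_eq_card_filter_eq h110, natCard_eq_card_filter_eq h100]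
  refine card_filter_eq_eq_of_card_filter_subset_eq _ _ _ (fun S => ?_) T
  rw [← natCard_eq_card_filter_subset h110, ← natCard_eq_card_filter_subset h100]
  exact natCard_occ110_superset_eq S

/-- 110 and 100 are super-strongly Wilf equivalent: the set of occurrence positions is
equidistributed. -/
theorem stmt7 (n : ℕ) (T : Finset ℕ) (hT : ∀ i ∈ T, i < n) :
    Nat.card {e : Fin n → Fin n // IsInvSeq e ∧ ∀ i : ℕ, Occ110At e i ↔ i ∈ T} =
    Nat.card {e : Fin n → Fin n // IsInvSeq e ∧ ∀ i : ℕ, Occ100At e i ↔ i ∈ T} :=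
  stmt7_general n T
end

section
/- Let π ∈ S_n and let e = Θ(π) be its inversion sequence, where e_i = |{j : j < i and π_j > π_i}|. Then for each 1 ≤ i ≤ n-1, π_i > π_{i+1} if and only if e_i < e_{i+1}. -/
/-- The inversion sequence of a permutation: `Θ(π)_i = #{j < i : π_j > π_i}`. -/
def theta {n : ℕ} (π : Equiv.Perm (Fin n)) (i : Fin n) : ℕ :=
  (Finset.univ.filter (fun j : Fin n => j < i ∧ π i < π j)).card

theorem stmt9 (n : ℕ) (π : Equiv.Perm (Fin n)) (i j : Fin n) (hij : (j : ℕ) = (i : ℕ) + 1) :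
    π j < π i ↔ theta π i < theta π j := by
  have hne : i ≠ j := by
    intro h; subst h; omega
  have hij' : i < j := by rw [Fin.lt_def]; omega
  constructor
  · intro h
    apply Finset.card_lt_card
    have hsub : (Finset.univ.filter (fun k : Fin n => k < i ∧ π i < π k)) ⊆
        (Finset.univ.filter (fun k : Fin n => k < j ∧ π j < π k)) := by
      intro k hk
      simp only [Finset.mem_filter, Finset.mem_univ, true_and] at *
      refine ⟨?_, lt_trans h hk.2⟩
      rw [Fin.lt_def] at *; omega
    rw [Finset.ssubset_iff_of_subset hsub]
    refine ⟨i, ?_, ?_⟩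
    · simp only [Finset.mem_filter, Finset.mem_univ, true_and]
      exact ⟨hij', h⟩
    · simp only [Finset.mem_filter, Finset.mem_univ, true_and]
      intro hmem
      exact absurd hmem.1 (lt_irrefl i)
  · intro hlt
    by_contra hnot
    push_neg at hnot
    have hne' : π i ≠ π j := fun h => hne (π.injective h)
    have h' : π i < π j := lt_of_le_of_ne hnot hne'
    have hsub : (Finset.univ.filter (fun k : Fin n => k < j ∧ π j < π k)) ⊆
        (Finset.univ.filter (fun k : Fin n => k < i ∧ π i < π k)) := by
      intro k hk
      simp only [Finset.mem_filter, Finset.mem_univ, true_and] at *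
      have hki : k < i := by
        rcases lt_or_eq_of_le (by rw [Fin.lt_def] at *; omega : (k : ℕ) ≤ i) with hc | hc
        · rwa [Fin.lt_def]
        · exfalso
          have : k = i := Fin.ext hc
          subst this
          exact absurd hk.2 (not_lt_of_gt h')
      exact ⟨hki, lt_trans h' hk.2⟩
    exact absurd (Finset.card_le_card hsub) (by unfold theta at hlt; omega)
end

section
/- For all n and all r ≥ 1, the number of inversion sequences of length n avoiding the consecutive increasing pattern 01...r (r+1 strictly increasing consecutive entries) equals the number of permutations of {1,...,n} with no r+1 consecutive strictly decreasing entries. -/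
/-- `f` contains `r+1` adjacent strictly increasing entries (the pattern `01…r`). -/
def ContainsInc (r n : ℕ) (f : ℕ → ℕ) : Prop :=
  ∃ i : ℕ, i + r < n ∧ ∀ j < r, f (i + j) < f (i + j + 1)

/-- `f` contains `r+1` adjacent strictly decreasing entries (the pattern `(r+1)r…1`). -/
def ContainsDec (r n : ℕ) (f : ℕ → ℕ) : Prop :=
  ∃ i : ℕ, i + r < n ∧ ∀ j < r, f (i + j + 1) < f (i + j)

/-!
The map `Θ` sending a permutation to its sequence of left inversion counts is a bijection onto the
inversion sequences: there are `n!` of each, and `Θ` is injective because `e_i` counts the values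
among `π 0, …, π i` exceeding `π i`, and that set of values is fixed by the later entries of `π`,
so `π` is recovered from `e` from right to left. Moreover for adjacent positions
`π_{i+1} < π_i ↔ e_i < e_{i+1}`, so `Θ` turns runs of `r + 1` consecutive descents of `π` into
runs of `r + 1` consecutive ascents of `e`.
-/

open Finset

section LeftInversionCount

variable {ι α : Type*} [Fintype ι] [LinearOrder ι]

lemma map_filter_le_eq_of_eqOn_Ioi {π σ : ι ≃ α} {i : ι} (htail : Set.EqOn π σ (Set.Ioi i)) :
    ({j | j ≤ i} : Finset ι).map π.toEmbedding = ({j | j ≤ i} : Finset ι).map σ.toEmbedding := by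
  have hlate : ∀ {π σ : ι ≃ α}, Set.EqOn π σ (Set.Ioi i) → ∀ v, i < π.symm v → i < σ.symm v :=
    fun {π σ} htail v hv => by
      rwa [(σ.symm_apply_eq.mpr (by rw [← htail hv, π.apply_symm_apply]) : σ.symm v = π.symm v)]
  ext v
  simp only [mem_map_equiv, mem_filter, mem_univ, true_and]
  rw [← not_lt, ← not_lt, not_iff_not]
  exact ⟨hlate htail v, hlate htail.symm v⟩

variable [LinearOrder α]

def leftInversions (f : ι → α) (i : ι) : Finset ι := {j | j < i ∧ f i < f j}

def leftInversionCount (f : ι → α) (i : ι) : ℕ := #(leftInversions f i)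

lemma leftInversionCount_lt_iff_of_covBy {f : ι → α} (hf : Function.Injective f) {a b : ι}
    (hab : a ⋖ b) : leftInversionCount f a < leftInversionCount f b ↔ f b < f a := by
  -- The positions before `b` are those before `a`, together with `a` itself.
  rcases (hf.ne hab.lt.ne).lt_or_gt with hasc | hdesc
  · refine iff_of_false (card_le_card fun j hj => ?_).not_gt hasc.asymm
    simp only [leftInversions, mem_filter, mem_univ, true_and] at hj ⊢
    obtain hja | rfl := (hab.le_of_lt hj.1).lt_or_eq
    · exact ⟨hja, hasc.trans hj.2⟩
    · exact absurd (hasc.trans hj.2) (lt_irrefl _)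
  · refine iff_of_true (card_lt_card (ssubset_iff_of_subset (fun j hj => ?_) |>.mpr
      ⟨a, by simp [leftInversions, hab.lt, hdesc], by simp [leftInversions]⟩)) hdesc
    simp only [leftInversions, mem_filter, mem_univ, true_and] at hj ⊢
    exact ⟨hj.1.trans hab.lt, hdesc.trans hj.2⟩

lemma strictAntiOn_card_filter_lt (T : Finset α) :
    StrictAntiOn (fun a => #{v ∈ T | a < v}) T := by
  intro a _ b hb hab
  refine card_lt_card (ssubset_iff_of_subset (fun v hv => ?_) |>.mpr ⟨b, ?_, ?_⟩)
  · simp only [mem_filter] at hv ⊢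
    exact ⟨hv.1, hab.trans hv.2⟩
  · exact mem_filter.mpr ⟨hb, hab⟩
  · simp

lemma leftInversionCount_eq_card_filter_map (π : ι ≃ α) (i : ι) :
    leftInversionCount π i = #{v ∈ ({j | j ≤ i} : Finset ι).map π.toEmbedding | π i < v} := by
  rw [leftInversionCount, leftInversions, filter_map, card_map]
  congr 1
  ext j
  simp only [mem_filter, mem_univ, true_and, Function.comp_apply, Equiv.coe_toEmbedding]
  exact ⟨fun h => ⟨h.1.le, h.2⟩,
    fun h => ⟨h.1.lt_of_ne (by rintro rfl; exact lt_irrefl _ h.2), h.2⟩⟩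

lemma leftInversionCount_injective :
    Function.Injective (fun π : ι ≃ α => leftInversionCount π) := by
  intro π σ h
  ext i
  induction i using WellFoundedGT.induction with
  | ind i ih =>
    have hprefix := map_filter_le_eq_of_eqOn_Ioi (π := π) (σ := σ) ih
    have hcount := congrFun h i
    simp only [leftInversionCount_eq_card_filter_map, hprefix] at hcount
    refine (strictAntiOn_card_filter_lt _).injOn ?_ ?_ hcount
    · rw [← hprefix]; simp
    · simp

end LeftInversionCount

section InversionSeq

variable {n : ℕ}

lemma leftInversionCount_le {α : Type*} [LinearOrder α] (f : Fin n → α) (i : Fin n) : leftInversionCount f i ≤ i := by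
  simpa [leftInversionCount] using card_le_card (s := leftInversions f i) (t := Iio i)
    (fun j hj => by simp_all [leftInversions])

def inversionSeq (π : Equiv.Perm (Fin n)) (i : Fin n) : Fin n :=
  ⟨leftInversionCount π i, (leftInversionCount_le π i).trans_lt i.isLt⟩

lemma isInvSeq_inversionSeq (π : Equiv.Perm (Fin n)) : IsInvSeq (inversionSeq π) :=
  fun i => leftInversionCount_le π i

lemma inversionSeq_injective : Function.Injective (inversionSeq (n := n)) := by
  intro π σ h
  apply leftInversionCount_injective
  funext i
  exact congrArg Fin.val (congrFun h i)

def invSeqEquivPi : {e : Fin n → Fin n // IsInvSeq e} ≃ ((i : Fin n) → Fin (i + 1)) where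
  toFun e i := ⟨e.1 i, Nat.lt_succ_of_le (e.2 i)⟩
  invFun f := ⟨fun i => ⟨f i, (f i).isLt.trans_le i.isLt⟩, fun i => Nat.le_of_lt_succ (f i).isLt⟩
  left_inv _ := rfl
  right_inv _ := rfl

lemma card_invSeq : Nat.card {e : Fin n → Fin n // IsInvSeq e} = n.factorial := by
  rw [Nat.card_congr invSeqEquivPi, Nat.card_pi]
  simp only [Nat.card_eq_fintype_card, Fintype.card_fin]
  rw [Fin.prod_univ_eq_prod_range (· + 1) n, prod_range_add_one_eq_factorial]

noncomputable def inversionSeqEquiv : Equiv.Perm (Fin n) ≃ {e : Fin n → Fin n // IsInvSeq e} :=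
  Equiv.ofBijective (fun π => ⟨inversionSeq π, isInvSeq_inversionSeq π⟩) <|
    Function.Injective.bijective_of_nat_card_le
      (fun _ _ h => inversionSeq_injective (congrArg Subtype.val h))
      (by rw [card_invSeq, Nat.card_perm, Nat.card_eq_fintype_card, Fintype.card_fin])

lemma inversionSeq_lt_iff_of_covBy (π : Equiv.Perm (Fin n)) {a b : Fin n} (hab : a ⋖ b) :
    inversionSeq π a < inversionSeq π b ↔ π b < π a :=
  leftInversionCount_lt_iff_of_covBy π.injective hab

end InversionSeq

lemma containsDec_extSeq_iff_containsInc {n r : ℕ} {d e : Fin n → Fin n}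
    (h : ∀ a b : Fin n, a ⋖ b → (d b < d a ↔ e a < e b)) :
    ContainsDec r n (extSeq d) ↔ ContainsInc r n (extSeq e) := by
  refine exists_congr fun i => and_congr_right fun hi => forall₂_congr fun j hj => ?_
  have h0 : i + j < n := by omega
  have h1 : i + j + 1 < n := by omega
  simp only [extSeq, dif_pos h0, dif_pos h1, Fin.val_fin_lt]
  exact h ⟨i + j, h0⟩ ⟨i + j + 1, h1⟩ (by simp)

theorem stmt11_general (n r : ℕ) :
    Nat.card {e : Fin n → Fin n // IsInvSeq e ∧ ¬ ContainsInc r n (extSeq e)} =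
    Nat.card {π : Equiv.Perm (Fin n) // ¬ ContainsDec r n (extSeq (⇑π))} := by
  have hpattern (π : Equiv.Perm (Fin n)) :
      ContainsDec r n (extSeq π) ↔ ContainsInc r n (extSeq (inversionSeq π)) :=
    containsDec_extSeq_iff_containsInc fun a b hab => (inversionSeq_lt_iff_of_covBy π hab).symm
  refine (Nat.card_congr ?_).symm
  exact (inversionSeqEquiv.subtypeEquiv fun π => not_congr (hpattern π)).trans
    (Equiv.subtypeSubtypeEquivSubtypeInter IsInvSeq fun e => ¬ ContainsInc r n (extSeq e))

theorem stmt11 (n r : ℕ) (hr : 1 ≤ r) :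
    Nat.card {e : Fin n → Fin n // IsInvSeq e ∧ ¬ ContainsInc r n (extSeq e)} =
    Nat.card {π : Equiv.Perm (Fin n) // ¬ ContainsDec r n (extSeq (⇑π))} :=
  stmt11_general n r
end

section
/- Let π ∈ S_n and e = Θ(π). Then π contains the vincular pattern 2-413 (there exist indices j < i with π_{i+1} < π_j < π_{i+2} such that the occurrence π_j π_i π_{i+1} π_{i+2} reduces to 2413) if and only if e contains the consecutive pattern 021 (there exists i with e_i < e_{i+2} < e_{i+1}). Consequently, |I_n(021)| = |S_n(2-413)| for all n. -/
/-- The inversion sequence of a permutation: `Θ(π)_i = #{j < i : π_j > π_i}`,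
extended to `ℕ → ℕ`. -/
def thetaExt {n : ℕ} (π : Equiv.Perm (Fin n)) : ℕ → ℕ := fun i =>
  if h : i < n then (Finset.univ.filter (fun j : Fin n => j < ⟨i, h⟩ ∧ π ⟨i, h⟩ < π j)).card
  else 0

/-- `f` contains the vincular pattern 2-413: positions `j < i` with `i+2 < n` such that
`f_j f_i f_{i+1} f_{i+2}` is order-isomorphic to 2413, i.e.
`f_{i+1} < f_j < f_{i+2} < f_i`. -/
def Contains2413 (n : ℕ) (f : ℕ → ℕ) : Prop :=
  ∃ j i : ℕ, j < i ∧ i + 2 < n ∧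
    f (i + 1) < f j ∧ f j < f (i + 2) ∧ f (i + 2) < f i

/-- `f` contains the consecutive pattern 021: `f_i < f_{i+2} < f_{i+1}`. -/
def Contains021 (n : ℕ) (f : ℕ → ℕ) : Prop :=
  ∃ i : ℕ, i + 2 < n ∧ f i < f (i + 2) ∧ f (i + 2) < f (i + 1)

namespace Stmt13

variable {n : ℕ}

lemma thetaExt_eq (π : Equiv.Perm (Fin n)) (i : ℕ) (h : i < n) :
    thetaExt π i
      = (Finset.univ.filter (fun t : Fin n => (t : ℕ) < i ∧ π ⟨i, h⟩ < π t)).card := by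
  simp only [thetaExt, dif_pos h]
  rfl

lemma extSeq_eq {e : Fin n → Fin n} (i : ℕ) (h : i < n) : extSeq e i = (e ⟨i, h⟩ : ℕ) := by
  simp only [extSeq, dif_pos h]

lemma ssub_card {s t : Finset (Fin n)} (hsub : s ⊆ t) {x : Fin n} (hx : x ∈ t) (hnx : x ∉ s) :
    s.card < t.card :=
  Finset.card_lt_card ((Finset.ssubset_iff_of_subset hsub).mpr ⟨x, hx, hnx⟩)

theorem part1 (π : Equiv.Perm (Fin n)) :
    Contains2413 n (extSeq (⇑π)) ↔ Contains021 n (thetaExt π) := by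
  constructor
  · rintro ⟨j, i, hji, hin, h1, h2, h3⟩
    have hi : i < n := by omega
    have hi1 : i + 1 < n := by omega
    have hj : j < n := by omega
    rw [extSeq_eq (i+1) hi1, extSeq_eq j hj] at h1
    rw [extSeq_eq j hj, extSeq_eq (i+2) hin] at h2
    rw [extSeq_eq (i+2) hin, extSeq_eq i hi] at h3
    have hb : π ⟨i+1, hi1⟩ < π ⟨j, hj⟩ := h1
    have hc : π ⟨j, hj⟩ < π ⟨i+2, hin⟩ := h2
    have ha : π ⟨i+2, hin⟩ < π ⟨i, hi⟩ := h3
    refine ⟨i, hin, ?_, ?_⟩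
    · -- e_i < e_{i+2}
      rw [thetaExt_eq π i hi, thetaExt_eq π (i+2) hin]
      apply ssub_card (x := ⟨i, hi⟩)
      · intro t ht
        simp only [Finset.mem_filter, Finset.mem_univ, true_and] at ht ⊢
        exact ⟨by omega, lt_trans ha ht.2⟩
      · simp only [Finset.mem_filter, Finset.mem_univ, true_and]
        exact ⟨by omega, ha⟩
      · simp only [Finset.mem_filter, Finset.mem_univ, true_and]
        rintro ⟨h4, -⟩
        omega
    · -- e_{i+2} < e_{i+1}
      rw [thetaExt_eq π (i+2) hin, thetaExt_eq π (i+1) hi1]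
      have heq : (Finset.univ.filter (fun t : Fin n => (t : ℕ) < i + 2 ∧ π ⟨i+2, hin⟩ < π t))
          = Finset.univ.filter (fun t : Fin n => (t : ℕ) < i + 1 ∧ π ⟨i+2, hin⟩ < π t) := by
        ext t
        simp only [Finset.mem_filter, Finset.mem_univ, true_and]
        constructor
        · rintro ⟨h4, h5⟩
          refine ⟨?_, h5⟩
          by_contra hcon
          have ht1 : t = ⟨i+1, hi1⟩ := Fin.ext (show (t:ℕ) = i + 1 by omega)
          subst ht1
          exact absurd h5 (not_lt.mpr (le_of_lt (lt_trans hb hc)))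
        · rintro ⟨h4, h5⟩; exact ⟨by omega, h5⟩
      rw [heq]
      apply ssub_card (x := ⟨j, hj⟩)
      · intro t ht
        simp only [Finset.mem_filter, Finset.mem_univ, true_and] at ht ⊢
        exact ⟨ht.1, lt_trans (lt_trans hb hc) ht.2⟩
      · simp only [Finset.mem_filter, Finset.mem_univ, true_and]
        exact ⟨by omega, hb⟩
      · simp only [Finset.mem_filter, Finset.mem_univ, true_and]
        rintro ⟨-, h5⟩
        exact absurd hc (not_lt.mpr (le_of_lt h5))
  · rintro ⟨i, hin, h1, h2⟩
    have hi : i < n := by omega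
    have hi1 : i + 1 < n := by omega
    rw [thetaExt_eq π i hi, thetaExt_eq π (i+2) hin] at h1
    rw [thetaExt_eq π (i+2) hin, thetaExt_eq π (i+1) hi1] at h2
    have hab : π ⟨i, hi⟩ ≠ π ⟨i+1, hi1⟩ := fun h => by
      have := π.injective h; simp only [Fin.mk.injEq] at this; omega
    have hac : π ⟨i, hi⟩ ≠ π ⟨i+2, hin⟩ := fun h => by
      have := π.injective h; simp only [Fin.mk.injEq] at this; omega
    have hbc : π ⟨i+1, hi1⟩ ≠ π ⟨i+2, hin⟩ := fun h => by
      have := π.injective h; simp only [Fin.mk.injEq] at this; omega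
    -- Step 1: b < c
    have hbc' : π ⟨i+1, hi1⟩ < π ⟨i+2, hin⟩ := by
      rcases lt_or_gt_of_ne hbc with h | h
      · exact h
      · exfalso
        have hsub : (Finset.univ.filter (fun t : Fin n => (t : ℕ) < i + 1 ∧ π ⟨i+1, hi1⟩ < π t))
            ⊆ Finset.univ.filter (fun t : Fin n => (t : ℕ) < i + 2 ∧ π ⟨i+2, hin⟩ < π t) := by
          intro t ht
          simp only [Finset.mem_filter, Finset.mem_univ, true_and] at ht ⊢
          exact ⟨by omega, lt_trans h ht.2⟩
        have := Finset.card_le_card hsub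
        omega
    -- Step 2: c < a
    have hca : π ⟨i+2, hin⟩ < π ⟨i, hi⟩ := by
      rcases lt_or_gt_of_ne hac with h | h
      · exfalso
        have hsub : (Finset.univ.filter (fun t : Fin n => (t : ℕ) < i + 2 ∧ π ⟨i+2, hin⟩ < π t))
            ⊆ Finset.univ.filter (fun t : Fin n => (t : ℕ) < i ∧ π ⟨i, hi⟩ < π t) := by
          intro t ht
          simp only [Finset.mem_filter, Finset.mem_univ, true_and] at ht ⊢
          refine ⟨?_, lt_trans h ht.2⟩
          have h4 := ht.1
          by_contra hcon
          rcases (by omega : (t : ℕ) = i ∨ (t : ℕ) = i + 1) with h5 | h5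
          · have ht1 : t = ⟨i, hi⟩ := Fin.ext h5
            subst ht1
            exact absurd ht.2 (not_lt.mpr (le_of_lt h))
          · have ht1 : t = ⟨i+1, hi1⟩ := Fin.ext h5
            subst ht1
            exact absurd ht.2 (not_lt.mpr (le_of_lt hbc'))
        have := Finset.card_le_card hsub
        omega
      · exact h
    -- Step 3: find j
    have heq1 : (Finset.univ.filter (fun t : Fin n => (t : ℕ) < i + 1 ∧ π ⟨i+1, hi1⟩ < π t))
        = insert (⟨i, hi⟩ : Fin n)
            (Finset.univ.filter (fun t : Fin n => (t : ℕ) < i ∧ π ⟨i+1, hi1⟩ < π t)) := by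
      ext t
      simp only [Finset.mem_insert, Finset.mem_filter, Finset.mem_univ, true_and]
      constructor
      · rintro ⟨h4, h5⟩
        rcases (by omega : (t : ℕ) < i ∨ (t : ℕ) = i) with h6 | h6
        · exact Or.inr ⟨h6, h5⟩
        · exact Or.inl (Fin.ext h6)
      · rintro (rfl | ⟨h4, h5⟩)
        · exact ⟨show i < i + 1 by omega, lt_trans hbc' hca⟩
        · exact ⟨by omega, h5⟩
    have heq2 : (Finset.univ.filter (fun t : Fin n => (t : ℕ) < i + 2 ∧ π ⟨i+2, hin⟩ < π t))
        = insert (⟨i, hi⟩ : Fin n)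
            (Finset.univ.filter (fun t : Fin n => (t : ℕ) < i ∧ π ⟨i+2, hin⟩ < π t)) := by
      ext t
      simp only [Finset.mem_insert, Finset.mem_filter, Finset.mem_univ, true_and]
      constructor
      · rintro ⟨h4, h5⟩
        rcases (by omega : (t : ℕ) < i ∨ (t : ℕ) = i ∨ (t : ℕ) = i + 1) with h6 | h6 | h6
        · exact Or.inr ⟨h6, h5⟩
        · exact Or.inl (Fin.ext h6)
        · exfalso
          have ht1 : t = ⟨i+1, hi1⟩ := Fin.ext h6
          subst ht1
          exact absurd h5 (not_lt.mpr (le_of_lt hbc'))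
      · rintro (rfl | ⟨h4, h5⟩)
        · exact ⟨show i < i + 2 by omega, hca⟩
        · exact ⟨by omega, h5⟩
    have hInb : (⟨i, hi⟩ : Fin n)
        ∉ (Finset.univ.filter (fun t : Fin n => (t : ℕ) < i ∧ π ⟨i+1, hi1⟩ < π t)) := by
      simp only [Finset.mem_filter, Finset.mem_univ, true_and]
      rintro ⟨h4, -⟩; omega
    have hInc : (⟨i, hi⟩ : Fin n)
        ∉ (Finset.univ.filter (fun t : Fin n => (t : ℕ) < i ∧ π ⟨i+2, hin⟩ < π t)) := by
      simp only [Finset.mem_filter, Finset.mem_univ, true_and]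
      rintro ⟨h4, -⟩; omega
    rw [heq2, heq1, Finset.card_insert_of_notMem hInb,
      Finset.card_insert_of_notMem hInc] at h2
    have hns : ¬ (Finset.univ.filter (fun t : Fin n => (t : ℕ) < i ∧ π ⟨i+1, hi1⟩ < π t))
        ⊆ (Finset.univ.filter (fun t : Fin n => (t : ℕ) < i ∧ π ⟨i+2, hin⟩ < π t)) := by
      intro h
      exact absurd (Finset.card_le_card h) (by omega)
    obtain ⟨J, hJmem, hJnot⟩ := Finset.not_subset.mp hns
    simp only [Finset.mem_filter, Finset.mem_univ, true_and, not_and, not_lt] at hJmem hJnot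
    have hJc : π J < π ⟨i+2, hin⟩ := by
      rcases lt_or_eq_of_le (hJnot hJmem.1) with h | h
      · exact h
      · exfalso
        have hJe := π.injective h
        rw [hJe] at hJmem
        have := hJmem.1
        simp only [Fin.val_mk] at this
        omega
    refine ⟨(J : ℕ), i, hJmem.1, hin, ?_, ?_, ?_⟩
    · rw [extSeq_eq (i+1) hi1, extSeq_eq (J : ℕ) (J.isLt)]
      simp only [Fin.eta]
      exact hJmem.2
    · rw [extSeq_eq (i+2) hin, extSeq_eq (J : ℕ) (J.isLt)]
      simp only [Fin.eta]
      exact hJc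
    · rw [extSeq_eq (i+2) hin, extSeq_eq i hi]
      exact hca


def thetaFin (π : Equiv.Perm (Fin n)) (i : Fin n) : Fin n :=
  ⟨(Finset.univ.filter (fun j : Fin n => j < i ∧ π i < π j)).card, by
    have h : (Finset.univ.filter (fun j : Fin n => j < i ∧ π i < π j)) ⊆ Finset.Iio i := by
      intro t ht
      simp only [Finset.mem_filter, Finset.mem_univ, true_and, Finset.mem_Iio] at ht ⊢
      exact ht.1
    have := Finset.card_le_card h
    have h2 : (Finset.Iio i).card = (i : ℕ) := by simp
    omega⟩

lemma thetaFin_card (π : Equiv.Perm (Fin n)) (i : Fin n) :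
    ((thetaFin π i : Fin n) : ℕ)
      = (((Finset.Ioi i).image π)ᶜ.filter (fun v => π i < v)).card := by
  show (Finset.univ.filter (fun j : Fin n => j < i ∧ π i < π j)).card = _
  have h1 : Finset.univ.filter (fun j : Fin n => j < i ∧ π i < π j)
      = (Finset.Iic i).filter (fun j => π i < π j) := by
    ext j
    simp only [Finset.mem_filter, Finset.mem_univ, true_and, Finset.mem_Iic]
    constructor
    · rintro ⟨h2, h3⟩; exact ⟨le_of_lt h2, h3⟩
    · rintro ⟨h2, h3⟩
      refine ⟨lt_of_le_of_ne h2 ?_, h3⟩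
      rintro rfl
      exact lt_irrefl _ h3
  have h2 : (Finset.Iic i).image π = ((Finset.Ioi i).image π)ᶜ := by
    ext v
    simp only [Finset.mem_image, Finset.mem_compl, Finset.mem_Iic, Finset.mem_Ioi]
    constructor
    · rintro ⟨a, ha, rfl⟩ ⟨b, hb, hba⟩
      have := π.injective hba
      subst this
      exact absurd ha (not_le.mpr hb)
    · intro h
      refine ⟨π.symm v, ?_, π.apply_symm_apply v⟩
      by_contra hcon
      exact h ⟨π.symm v, not_le.mp hcon, π.apply_symm_apply v⟩
  rw [h1, ← h2, Finset.filter_image, Finset.card_image_of_injective _ π.injective]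

lemma count_inj {S : Finset (Fin n)} {a b : Fin n} (ha : a ∈ S) (hb : b ∈ S)
    (h : (S.filter (fun v => a < v)).card = (S.filter (fun v => b < v)).card) : a = b := by
  rcases lt_trichotomy a b with hlt | he | hlt
  · exfalso
    have hsub : S.filter (fun v => b < v) ⊆ S.filter (fun v => a < v) := by
      intro t ht
      simp only [Finset.mem_filter] at ht ⊢
      exact ⟨ht.1, lt_trans hlt ht.2⟩
    have : (S.filter (fun v => b < v)).card < (S.filter (fun v => a < v)).card :=
      Finset.card_lt_card ((Finset.ssubset_iff_of_subset hsub).mpr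
        ⟨b, by simp only [Finset.mem_filter]; exact ⟨hb, hlt⟩,
          by simp only [Finset.mem_filter]; rintro ⟨-, h2⟩; exact lt_irrefl _ h2⟩)
    omega
  · exact he
  · exfalso
    have hsub : S.filter (fun v => a < v) ⊆ S.filter (fun v => b < v) := by
      intro t ht
      simp only [Finset.mem_filter] at ht ⊢
      exact ⟨ht.1, lt_trans hlt ht.2⟩
    have : (S.filter (fun v => a < v)).card < (S.filter (fun v => b < v)).card :=
      Finset.card_lt_card ((Finset.ssubset_iff_of_subset hsub).mpr
        ⟨a, by simp only [Finset.mem_filter]; exact ⟨ha, hlt⟩,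
          by simp only [Finset.mem_filter]; rintro ⟨-, h2⟩; exact lt_irrefl _ h2⟩)
    omega

lemma theta_inj : Function.Injective (thetaFin (n := n)) := by
  intro π σ h
  have key : ∀ m : ℕ, ∀ i : Fin n, n - (i : ℕ) ≤ m → π i = σ i := by
    intro m
    induction m with
    | zero => intro i hi; exact absurd hi (by have := i.isLt; omega)
    | succ m ih =>
      intro i hi
      have htail : ∀ j : Fin n, i < j → π j = σ j := by
        intro j hj
        exact ih j (by have h1 : (i : ℕ) < (j : ℕ) := hj; omega)
      have himg : (Finset.Ioi i).image π = (Finset.Ioi i).image σ := by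
        apply Finset.image_congr
        intro j hj
        exact htail j (Finset.mem_Ioi.mp hj)
      have hmemπ : π i ∈ ((Finset.Ioi i).image π)ᶜ := by
        simp only [Finset.mem_compl, Finset.mem_image, Finset.mem_Ioi, not_exists]
        rintro j ⟨hj, hje⟩
        have := π.injective hje
        subst this
        exact lt_irrefl _ hj
      have hmemσ : σ i ∈ ((Finset.Ioi i).image π)ᶜ := by
        rw [himg]
        simp only [Finset.mem_compl, Finset.mem_image, Finset.mem_Ioi, not_exists]
        rintro j ⟨hj, hje⟩
        have := σ.injective hje
        subst this
        exact lt_irrefl _ hj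
      have hcard : ((((Finset.Ioi i).image π)ᶜ).filter (fun v => π i < v)).card
          = ((((Finset.Ioi i).image π)ᶜ).filter (fun v => σ i < v)).card := by
        rw [← thetaFin_card π i, h, thetaFin_card σ i, himg]
      exact count_inj hmemπ hmemσ hcard
  apply Equiv.ext
  intro i
  exact key n i (by omega)


lemma thetaFin_isInv (π : Equiv.Perm (Fin n)) : IsInvSeq (thetaFin π) := by
  intro i
  exact Nat.le_of_lt_succ (Nat.lt_succ_of_le (by
    show (Finset.univ.filter (fun j : Fin n => j < i ∧ π i < π j)).card ≤ (i : ℕ)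
    have h : (Finset.univ.filter (fun j : Fin n => j < i ∧ π i < π j)) ⊆ Finset.Iio i := by
      intro t ht
      simp only [Finset.mem_filter, Finset.mem_univ, true_and, Finset.mem_Iio] at ht ⊢
      exact ht.1
    have := Finset.card_le_card h
    have h2 : (Finset.Iio i).card = (i : ℕ) := by simp
    omega))

noncomputable instance : Fintype {e : Fin n → Fin n // IsInvSeq e} := Fintype.ofFinite _

def invEquiv : {e : Fin n → Fin n // IsInvSeq e} ≃ ((i : Fin n) → Fin ((i : ℕ) + 1)) where
  toFun e i := ⟨(e.1 i : ℕ), Nat.lt_succ_of_le (e.2 i)⟩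
  invFun f := ⟨fun i => ⟨(f i : ℕ), lt_of_lt_of_le (f i).isLt i.isLt⟩,
    fun i => Nat.le_of_lt_succ (f i).isLt⟩
  left_inv e := by ext i; rfl
  right_inv f := by ext i; rfl

lemma card_inv : Nat.card {e : Fin n → Fin n // IsInvSeq e} = n.factorial := by
  rw [Nat.card_congr invEquiv, Nat.card_pi]
  simp only [Nat.card_eq_fintype_card, Fintype.card_fin]
  induction n with
  | zero => simp
  | succ m ih =>
    rw [Fin.prod_univ_castSucc]
    simp only [Fin.coe_castSucc, Fin.val_last] at *
    rw [ih, Nat.factorial_succ]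
    ring

lemma theta_bij : Function.Bijective
    (fun π : Equiv.Perm (Fin n) => (⟨thetaFin π, thetaFin_isInv π⟩ : {e // IsInvSeq e})) := by
  rw [Nat.bijective_iff_injective_and_card]
  constructor
  · intro π σ h
    exact theta_inj (congrArg Subtype.val h)
  · rw [card_inv, Nat.card_eq_fintype_card, Fintype.card_perm, Fintype.card_fin]


lemma extSeq_thetaFin (π : Equiv.Perm (Fin n)) : extSeq (thetaFin π) = thetaExt π := by
  funext i
  simp only [extSeq, thetaExt]
  split
  · rfl
  · rfl

end Stmt13

theorem stmt13 (n : ℕ) :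
    (∀ π : Equiv.Perm (Fin n),
      Contains2413 n (extSeq (⇑π)) ↔ Contains021 n (thetaExt π)) ∧
    Nat.card {e : Fin n → Fin n // IsInvSeq e ∧ ¬ Contains021 n (extSeq e)} =
    Nat.card {π : Equiv.Perm (Fin n) // ¬ Contains2413 n (extSeq (⇑π))} := by
  refine ⟨Stmt13.part1, ?_⟩
  symm
  apply Nat.card_eq_of_bijective
    (f := fun p : {π : Equiv.Perm (Fin n) // ¬ Contains2413 n (extSeq (⇑π))} =>
      (⟨Stmt13.thetaFin p.1, Stmt13.thetaFin_isInv p.1, by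
        rw [Stmt13.extSeq_thetaFin]
        intro hc
        exact p.2 ((Stmt13.part1 p.1).mpr hc)⟩ :
        {e : Fin n → Fin n // IsInvSeq e ∧ ¬ Contains021 n (extSeq e)}))
  constructor
  · intro p q hpq
    have h1 : Stmt13.thetaFin p.1 = Stmt13.thetaFin q.1 := congrArg Subtype.val hpq
    exact Subtype.ext (Stmt13.theta_inj h1)
  · rintro ⟨e, he, hne⟩
    obtain ⟨π, hπ⟩ := Stmt13.theta_bij.surjective ⟨e, he⟩
    have hθ : Stmt13.thetaFin π = e := congrArg Subtype.val hπ
    have havoid : ¬ Contains2413 n (extSeq (⇑π)) := by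
      intro hc
      apply hne
      rw [← hθ, Stmt13.extSeq_thetaFin]
      exact (Stmt13.part1 π).mp hc
    exact ⟨⟨π, havoid⟩, Subtype.ext hθ⟩
end
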